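/- arXiv:2202.00214 — 6 statements merged into one kernel-verified Lean document; each statement's English description precedes it below -/
import Mathlib

section
/- The number of αβ-staircase tableaux of size n is (n+1)!. -/
/-- An αβ-staircase tableau of size `n`, encoded as a filling of the boxes
`(i, j)` with `i + j ≤ n - 1` of the staircase Young diagram of shape
`(n, n-1, …, 1)` (box `(i,j)` is the `j`-th box of row `i`; drawn in Russian
notation, the "top row" consists of the boxes with `i + j = n - 1`, and the two
families of diagonals become the rows and the columns).  Each box is empty
(`none`) or contains α (`some 0`) or β (`some 1`), such that:
(1) no box in the top row is empty;
(2) each box southeast of a β in the same diagonal as that β (i.e. in the same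
row, strictly before it) is empty;
(3) each box southwest of an α in the same diagonal as that α (i.e. in the same
column, strictly before it) is empty. -/
def IsABStaircase (n : ℕ) (f : Fin n × Fin n → Option (Fin 2)) : Prop :=
  (∀ p : Fin n × Fin n, n ≤ (p.1 : ℕ) + (p.2 : ℕ) → f p = none) ∧
  (∀ p : Fin n × Fin n, (p.1 : ℕ) + (p.2 : ℕ) = n - 1 → f p ≠ none) ∧
  (∀ p : Fin n × Fin n, f p = some 1 → ∀ j' : Fin n, j' < p.2 → f (p.1, j') = none) ∧
  (∀ p : Fin n × Fin n, f p = some 0 → ∀ i' : Fin n, i' < p.1 → f (i', p.2) = none)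

instance (n : ℕ) : DecidablePred (IsABStaircase n) := fun _ => by
  unfold IsABStaircase; infer_instance

/-- Validity of a row filling with forced-empty set `B`. -/
def SeqValid {m : ℕ} (B : Fin m → Prop) (g : Fin m → Option (Fin 2)) : Prop :=
  (∀ j, B j → g j = none) ∧ (∀ j, g j = some 1 → ∀ j' : Fin m, j' < j → g j' = none)

instance {m : ℕ} (B : Fin m → Prop) [DecidablePred B] : DecidablePred (SeqValid B) :=
  fun _ => by unfold SeqValid; infer_instance

/-- weight exponent: number of free positions not containing α. -/
def wtB {m : ℕ} (B : Fin m → Prop) [DecidablePred B] (g : Fin m → Option (Fin 2)) : ℕ :=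
  ∑ j, if ¬ B j ∧ g j ≠ some 0 then 1 else 0

def KB {m : ℕ} (B : Fin m → Prop) [DecidablePred B] : ℕ :=
  ∑ j, if ¬ B j then 1 else 0

lemma seqValid_snoc {m : ℕ} (B : Fin (m+1) → Prop) (g' : Fin m → Option (Fin 2))
    (v : Option (Fin 2)) :
    SeqValid B (Fin.snoc g' v) ↔
      SeqValid (fun j => B j.castSucc) g' ∧ (B (Fin.last m) → v = none) ∧
        (v = some 1 → ∀ j', g' j' = none) := by
  unfold SeqValid
  constructor
  · rintro ⟨h1, h2⟩
    refine ⟨⟨fun j hj => ?_, fun j hj j' hj' => ?_⟩, fun hB => ?_, fun hv j' => ?_⟩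
    · have := h1 j.castSucc hj; simpa using this
    · have := h2 j.castSucc (by simpa using hj) j'.castSucc
        (Fin.castSucc_lt_castSucc_iff.mpr hj')
      simpa using this
    · have := h1 (Fin.last m) hB; simpa using this
    · have := h2 (Fin.last m) (by simpa using hv) j'.castSucc (Fin.castSucc_lt_last j')
      simpa using this
  · rintro ⟨⟨h1, h2⟩, h3, h4⟩
    constructor
    · intro j hj
      rcases eq_or_ne j (Fin.last m) with rfl | hne
      · simpa using h3 hj
      · obtain ⟨j₀, rfl⟩ := Fin.exists_castSucc_eq.mpr hne
        simpa using h1 j₀ (by simpa using hj)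
    · intro j hj j' hj'
      obtain ⟨j₀', rfl⟩ := Fin.exists_castSucc_eq.mpr (Fin.ne_last_of_lt hj')
      rcases eq_or_ne j (Fin.last m) with rfl | hne
      · rw [Fin.snoc_last] at hj
        simpa using h4 hj j₀'
      · obtain ⟨j₀, rfl⟩ := Fin.exists_castSucc_eq.mpr hne
        rw [Fin.snoc_castSucc] at hj
        simpa using h2 j₀ hj j₀' (Fin.castSucc_lt_castSucc_iff.mp hj')

lemma wtB_snoc {m : ℕ} (B : Fin (m+1) → Prop) [DecidablePred B]
    (g' : Fin m → Option (Fin 2)) (v : Option (Fin 2)) :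
    wtB B (Fin.snoc g' v) =
      wtB (fun j => B j.castSucc) g' + (if ¬ B (Fin.last m) ∧ v ≠ some 0 then 1 else 0) := by
  unfold wtB
  rw [Fin.sum_univ_castSucc]
  simp [Fin.snoc_castSucc, Fin.snoc_last]

lemma KB_snoc {m : ℕ} (B : Fin (m+1) → Prop) [DecidablePred B] :
    KB B = KB (fun j => B j.castSucc) + (if ¬ B (Fin.last m) then 1 else 0) := by
  unfold KB
  rw [Fin.sum_univ_castSucc]

lemma wtB_none {m : ℕ} (B : Fin m → Prop) [DecidablePred B] :
    wtB B (fun _ => none) = KB B := by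
  unfold wtB KB
  simp

lemma seqValid_none {m : ℕ} (B : Fin m → Prop) :
    SeqValid B (fun _ => none) := ⟨fun _ _ => rfl, fun j hj => by simp at hj⟩

lemma Ulemma (y : ℕ) : ∀ (m : ℕ) (B : Fin m → Prop) (_ : DecidablePred B),
    (∑ g : Fin m → Option (Fin 2), if SeqValid B g then y ^ wtB B g else 0) + y ^ (KB B + 1)
      = (1+y) ^ (KB B + 1) := by
  intro m
  induction m with
  | zero =>
    intro B inst
    have h2 : KB B = 0 := by unfold KB; simp
    have h1 : ∀ g : Fin 0 → Option (Fin 2), (if SeqValid B g then y ^ wtB B g else 0) = 1 := by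
      intro g
      rw [if_pos ⟨fun j => j.elim0, fun j => j.elim0⟩]
      unfold wtB; simp
    rw [Finset.sum_congr rfl (fun g _ => h1 g), h2]
    simp
  | succ m ih =>
    intro B inst
    have key : (∑ g : Fin (m+1) → Option (Fin 2), if SeqValid B g then y ^ wtB B g else 0)
        = ∑ v : Option (Fin 2), ∑ g' : Fin m → Option (Fin 2),
            if SeqValid B (Fin.snoc g' v) then y ^ wtB B (Fin.snoc g' v) else 0 := by
      rw [← Equiv.sum_comp (Fin.snocEquiv (fun _ : Fin (m+1) => Option (Fin 2)))
        (fun g => if SeqValid B g then y ^ wtB B g else 0), Fintype.sum_prod_type]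
      rfl
    rw [key]
    have hsnoc : ∀ (v : Option (Fin 2)) (g' : Fin m → Option (Fin 2)),
        (if SeqValid B (Fin.snoc g' v) then y ^ wtB B (Fin.snoc g' v) else 0)
        = if (SeqValid (fun j : Fin m => B j.castSucc) g' ∧ (B (Fin.last m) → v = none)
              ∧ (v = some 1 → ∀ j', g' j' = none))
            then y ^ (wtB (fun j : Fin m => B j.castSucc) g'
                + (if ¬ B (Fin.last m) ∧ v ≠ some 0 then 1 else 0)) else 0 := by
      intro v g'
      rw [wtB_snoc]
      exact if_congr (seqValid_snoc B g' v) rfl rfl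
    rw [Fintype.sum_option, Fin.sum_univ_two]
    rw [Finset.sum_congr rfl (fun g' _ => hsnoc none g'),
        Finset.sum_congr rfl (fun g' _ => hsnoc (some 0) g'),
        Finset.sum_congr rfl (fun g' _ => hsnoc (some 1) g')]
    by_cases hB : B (Fin.last m)
    · have hK : KB B = KB (fun j : Fin m => B j.castSucc) := by rw [KB_snoc]; simp [hB]
      have t1 : ∀ g' : Fin m → Option (Fin 2),
          (if (SeqValid (fun j : Fin m => B j.castSucc) g' ∧ (B (Fin.last m) → (none : Option (Fin 2)) = none)
              ∧ ((none : Option (Fin 2)) = some 1 → ∀ j', g' j' = none))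
            then y ^ (wtB (fun j : Fin m => B j.castSucc) g'
                + (if ¬ B (Fin.last m) ∧ (none : Option (Fin 2)) ≠ some 0 then 1 else 0)) else 0)
          = if SeqValid (fun j : Fin m => B j.castSucc) g'
              then y ^ wtB (fun j : Fin m => B j.castSucc) g' else 0 := by
        intro g'; simp [hB]
      have t2 : ∀ (k : Fin 2) (g' : Fin m → Option (Fin 2)),
          (if (SeqValid (fun j : Fin m => B j.castSucc) g' ∧ (B (Fin.last m) → (some k : Option (Fin 2)) = none)
              ∧ ((some k : Option (Fin 2)) = some 1 → ∀ j', g' j' = none))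
            then y ^ (wtB (fun j : Fin m => B j.castSucc) g'
                + (if ¬ B (Fin.last m) ∧ (some k : Option (Fin 2)) ≠ some 0 then 1 else 0)) else 0)
          = 0 := by
        intro k g'; simp [hB]
      rw [Finset.sum_congr rfl (fun g' _ => t1 g'),
          Finset.sum_congr rfl (fun g' _ => t2 0 g'),
          Finset.sum_congr rfl (fun g' _ => t2 1 g'), hK]
      simpa using ih (fun j : Fin m => B j.castSucc) inferInstance
    · have hK : KB B = KB (fun j : Fin m => B j.castSucc) + 1 := by rw [KB_snoc]; simp [hB]
      have t1 : ∀ g' : Fin m → Option (Fin 2),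
          (if (SeqValid (fun j : Fin m => B j.castSucc) g' ∧ (B (Fin.last m) → (none : Option (Fin 2)) = none)
              ∧ ((none : Option (Fin 2)) = some 1 → ∀ j', g' j' = none))
            then y ^ (wtB (fun j : Fin m => B j.castSucc) g'
                + (if ¬ B (Fin.last m) ∧ (none : Option (Fin 2)) ≠ some 0 then 1 else 0)) else 0)
          = y * (if SeqValid (fun j : Fin m => B j.castSucc) g'
              then y ^ wtB (fun j : Fin m => B j.castSucc) g' else 0) := by
        intro g'
        by_cases h : SeqValid (fun j : Fin m => B j.castSucc) g' <;>
          simp [h, hB, pow_succ, mul_comm]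
      have t3 : ∀ g' : Fin m → Option (Fin 2),
          (if (SeqValid (fun j : Fin m => B j.castSucc) g' ∧ (B (Fin.last m) → (some 1 : Option (Fin 2)) = none)
              ∧ ((some 1 : Option (Fin 2)) = some 1 → ∀ j', g' j' = none))
            then y ^ (wtB (fun j : Fin m => B j.castSucc) g'
                + (if ¬ B (Fin.last m) ∧ (some 1 : Option (Fin 2)) ≠ some 0 then 1 else 0)) else 0)
          = if g' = (fun _ => none) then y ^ (KB (fun j : Fin m => B j.castSucc) + 1) else 0 := by
        intro g'
        by_cases h : g' = (fun _ => none)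
        · subst h
          simp [hB, seqValid_none, wtB_none]
        · have h2 : ¬ (∀ j', g' j' = none) := fun hc => h (funext hc)
          simp [hB, h, h2]
      have t2 : ∀ g' : Fin m → Option (Fin 2),
          (if (SeqValid (fun j : Fin m => B j.castSucc) g' ∧ (B (Fin.last m) → (some 0 : Option (Fin 2)) = none)
              ∧ ((some 0 : Option (Fin 2)) = some 1 → ∀ j', g' j' = none))
            then y ^ (wtB (fun j : Fin m => B j.castSucc) g'
                + (if ¬ B (Fin.last m) ∧ (some 0 : Option (Fin 2)) ≠ some 0 then 1 else 0)) else 0)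
          = if SeqValid (fun j : Fin m => B j.castSucc) g'
              then y ^ wtB (fun j : Fin m => B j.castSucc) g' else 0 := by
        intro g'; simp [hB]
      rw [Finset.sum_congr rfl (fun g' _ => t1 g'),
          Finset.sum_congr rfl (fun g' _ => t2 g'),
          Finset.sum_congr rfl (fun g' _ => t3 g'), hK, ← Finset.mul_sum]
      have hlast : (∑ g' : Fin m → Option (Fin 2),
          if g' = (fun _ => none) then y ^ (KB (fun j : Fin m => B j.castSucc) + 1) else 0)
          = y ^ (KB (fun j : Fin m => B j.castSucc) + 1) := by
        rw [Finset.sum_ite_eq' Finset.univ ((fun _ => none) : Fin m → Option (Fin 2))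
          (fun _ => y ^ (KB (fun j : Fin m => B j.castSucc) + 1))]
        simp
      rw [hlast]
      have ihs := ih (fun j : Fin m => B j.castSucc) inferInstance
      set U' := ∑ g' : Fin m → Option (Fin 2),
        if SeqValid (fun j : Fin m => B j.castSucc) g'
          then y ^ wtB (fun j : Fin m => B j.castSucc) g' else 0 with hU'
      set K' := KB (fun j : Fin m => B j.castSucc) with hK'
      calc y * U' + (U' + y ^ (K' + 1)) + y ^ (K' + 1 + 1)
          = (1 + y) * (U' + y ^ (K' + 1)) := by ring
        _ = (1 + y) ^ (K' + 1 + 1) := by rw [ihs, ← pow_succ']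

lemma Vlemma (y m : ℕ) (B : Fin (m+1) → Prop) (inst : DecidablePred B)
    (hB : ¬ B (Fin.last m)) :
    (∑ g : Fin (m+1) → Option (Fin 2),
        if SeqValid B g ∧ g (Fin.last m) ≠ none then y ^ wtB B g else 0)
      = (1+y) ^ (KB B) := by
  have key : (∑ g : Fin (m+1) → Option (Fin 2),
      if SeqValid B g ∧ g (Fin.last m) ≠ none then y ^ wtB B g else 0)
      = ∑ v : Option (Fin 2), ∑ g' : Fin m → Option (Fin 2),
          if SeqValid B (Fin.snoc g' v) ∧ (Fin.snoc g' v : Fin (m+1) → Option (Fin 2)) (Fin.last m) ≠ none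
            then y ^ wtB B (Fin.snoc g' v) else 0 := by
    rw [← Equiv.sum_comp (Fin.snocEquiv (fun _ : Fin (m+1) => Option (Fin 2)))
      (fun g => if SeqValid B g ∧ g (Fin.last m) ≠ none then y ^ wtB B g else 0),
      Fintype.sum_prod_type]
    rfl
  rw [key]
  have hsnoc : ∀ (v : Option (Fin 2)) (g' : Fin m → Option (Fin 2)),
      (if SeqValid B (Fin.snoc g' v) ∧ (Fin.snoc g' v : Fin (m+1) → Option (Fin 2)) (Fin.last m) ≠ none
        then y ^ wtB B (Fin.snoc g' v) else 0)
      = if (SeqValid (fun j : Fin m => B j.castSucc) g' ∧ (B (Fin.last m) → v = none)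
            ∧ (v = some 1 → ∀ j', g' j' = none)) ∧ v ≠ none
          then y ^ (wtB (fun j : Fin m => B j.castSucc) g'
              + (if ¬ B (Fin.last m) ∧ v ≠ some 0 then 1 else 0)) else 0 := by
    intro v g'
    rw [wtB_snoc]
    exact if_congr (and_congr (seqValid_snoc B g' v) (by rw [Fin.snoc_last])) rfl rfl
  rw [Fintype.sum_option, Fin.sum_univ_two]
  rw [Finset.sum_congr rfl (fun g' _ => hsnoc none g'),
      Finset.sum_congr rfl (fun g' _ => hsnoc (some 0) g'),
      Finset.sum_congr rfl (fun g' _ => hsnoc (some 1) g')]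
  have t0 : ∀ g' : Fin m → Option (Fin 2),
      (if (SeqValid (fun j : Fin m => B j.castSucc) g' ∧ (B (Fin.last m) → (none : Option (Fin 2)) = none)
            ∧ ((none : Option (Fin 2)) = some 1 → ∀ j', g' j' = none)) ∧ (none : Option (Fin 2)) ≠ none
          then y ^ (wtB (fun j : Fin m => B j.castSucc) g'
              + (if ¬ B (Fin.last m) ∧ (none : Option (Fin 2)) ≠ some 0 then 1 else 0)) else 0) = 0 := by
    intro g'; simp
  have t2 : ∀ g' : Fin m → Option (Fin 2),
      (if (SeqValid (fun j : Fin m => B j.castSucc) g' ∧ (B (Fin.last m) → (some 0 : Option (Fin 2)) = none)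
            ∧ ((some 0 : Option (Fin 2)) = some 1 → ∀ j', g' j' = none)) ∧ (some 0 : Option (Fin 2)) ≠ none
          then y ^ (wtB (fun j : Fin m => B j.castSucc) g'
              + (if ¬ B (Fin.last m) ∧ (some 0 : Option (Fin 2)) ≠ some 0 then 1 else 0)) else 0)
        = if SeqValid (fun j : Fin m => B j.castSucc) g'
            then y ^ wtB (fun j : Fin m => B j.castSucc) g' else 0 := by
    intro g'; simp [hB]
  have t3 : ∀ g' : Fin m → Option (Fin 2),
      (if (SeqValid (fun j : Fin m => B j.castSucc) g' ∧ (B (Fin.last m) → (some 1 : Option (Fin 2)) = none)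
            ∧ ((some 1 : Option (Fin 2)) = some 1 → ∀ j', g' j' = none)) ∧ (some 1 : Option (Fin 2)) ≠ none
          then y ^ (wtB (fun j : Fin m => B j.castSucc) g'
              + (if ¬ B (Fin.last m) ∧ (some 1 : Option (Fin 2)) ≠ some 0 then 1 else 0)) else 0)
        = if g' = (fun _ => none) then y ^ (KB (fun j : Fin m => B j.castSucc) + 1) else 0 := by
    intro g'
    by_cases h : g' = (fun _ => none)
    · subst h
      simp [hB, seqValid_none, wtB_none]
    · have h2 : ¬ (∀ j', g' j' = none) := fun hc => h (funext hc)
      simp [hB, h, h2]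
  rw [Finset.sum_congr rfl (fun g' _ => t0 g'),
      Finset.sum_congr rfl (fun g' _ => t2 g'),
      Finset.sum_congr rfl (fun g' _ => t3 g')]
  have hlast : (∑ g' : Fin m → Option (Fin 2),
      if g' = (fun _ => none) then y ^ (KB (fun j : Fin m => B j.castSucc) + 1) else 0)
      = y ^ (KB (fun j : Fin m => B j.castSucc) + 1) := by
    rw [Finset.sum_ite_eq' Finset.univ ((fun _ => none) : Fin m → Option (Fin 2))
      (fun _ => y ^ (KB (fun j : Fin m => B j.castSucc) + 1))]
    simp
  rw [hlast]
  have hK : KB B = KB (fun j : Fin m => B j.castSucc) + 1 := by rw [KB_snoc]; simp [hB]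
  rw [hK]
  have := Ulemma y m (fun j : Fin m => B j.castSucc) inferInstance
  simpa using this

def colB {n : ℕ} (S : Fin n × Fin n → Option (Fin 2)) : Fin (n+1) → Prop :=
  fun j => ∃ j₀ : Fin n, j₀.castSucc = j ∧ ∃ i₀, S (i₀, j₀) = some 0

instance {n : ℕ} (S : Fin n × Fin n → Option (Fin 2)) : DecidablePred (colB S) :=
  fun _ => by unfold colB; infer_instance

def mkT {n : ℕ} (S : Fin n × Fin n → Option (Fin 2)) (g : Fin (n+1) → Option (Fin 2)) :
    Fin (n+1) × Fin (n+1) → Option (Fin 2) :=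
  fun p => Fin.cases (g p.2) (fun i₀ => Fin.lastCases none (fun j₀ => S (i₀, j₀)) p.2) p.1

@[simp] lemma mkT_zero {n : ℕ} (S : Fin n × Fin n → Option (Fin 2)) (g) (j : Fin (n+1)) :
    mkT S g (0, j) = g j := by simp [mkT]

@[simp] lemma mkT_succ_last {n : ℕ} (S : Fin n × Fin n → Option (Fin 2)) (g) (i₀ : Fin n) :
    mkT S g (i₀.succ, Fin.last n) = none := by simp [mkT]

@[simp] lemma mkT_succ_cast {n : ℕ} (S : Fin n × Fin n → Option (Fin 2)) (g) (i₀ j₀ : Fin n) :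
    mkT S g (i₀.succ, j₀.castSucc) = S (i₀, j₀) := by simp [mkT]

def noA {n : ℕ} (f : Fin n × Fin n → Option (Fin 2)) : ℕ :=
  ∑ j : Fin n, if (∀ i, f (i,j) ≠ some 0) then 1 else 0

lemma valid_mk {n : ℕ} (S : Fin n × Fin n → Option (Fin 2)) (g : Fin (n+1) → Option (Fin 2)) :
    IsABStaircase (n+1) (mkT S g) ↔
      IsABStaircase n S ∧ (SeqValid (colB S) g ∧ g (Fin.last n) ≠ none) := by
  constructor
  · rintro ⟨F1, F2, F3, F4⟩
    refine ⟨⟨?_, ?_, ?_, ?_⟩, ⟨?_, ?_⟩, ?_⟩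
    · rintro ⟨i₀, j₀⟩ h
      simp only [] at h
      have := F1 (i₀.succ, j₀.castSucc) (by simp; omega)
      simpa using this
    · rintro ⟨i₀, j₀⟩ h
      simp only [] at h
      have hn : (i₀ : ℕ) < n := i₀.isLt
      have := F2 (i₀.succ, j₀.castSucc) (by simp; omega)
      simpa using this
    · rintro ⟨i₀, j₀⟩ hβ j₀' hlt
      have := F3 (i₀.succ, j₀.castSucc) (by simpa using hβ) j₀'.castSucc
        (by simpa [Fin.castSucc_lt_castSucc_iff] using hlt)
      simpa using this
    · rintro ⟨i₀, j₀⟩ hα i₀' hlt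
      have := F4 (i₀.succ, j₀.castSucc) (by simpa using hα) i₀'.succ
        (by simpa [Fin.succ_lt_succ_iff] using hlt)
      simpa using this
    · rintro j ⟨j₀, rfl, i₀, hα⟩
      have := F4 (i₀.succ, j₀.castSucc) (by simpa using hα) 0 (Fin.succ_pos i₀)
      simpa using this
    · intro j hβ j' hlt
      have := F3 (0, j) (by simpa using hβ) j' hlt
      simpa using this
    · have := F2 (0, Fin.last n) (by simp)
      simpa using this
  · rintro ⟨⟨S1, S2, S3, S4⟩, ⟨GB, Gβ⟩, Glast⟩
    refine ⟨?_, ?_, ?_, ?_⟩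
    · rintro ⟨i, j⟩ h
      induction i using Fin.cases with
      | zero =>
        exfalso
        have : (j : ℕ) < n + 1 := j.isLt
        simp at h
        omega
      | succ i₀ =>
        induction j using Fin.lastCases with
        | last => simp
        | cast j₀ =>
          simp only [mkT_succ_cast]
          apply S1 (i₀, j₀)
          show n ≤ (i₀ : ℕ) + (j₀ : ℕ)
          simp at h
          omega
    · rintro ⟨i, j⟩ h
      induction i using Fin.cases with
      | zero =>
        have hj : j = Fin.last n := by
          apply Fin.ext
          simp at h
          simpa using h
        subst hj
        simpa using Glast
      | succ i₀ =>
        induction j using Fin.lastCases with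
        | last =>
          exfalso
          simp at h
        | cast j₀ =>
          simp only [mkT_succ_cast]
          apply S2 (i₀, j₀)
          show (i₀ : ℕ) + (j₀ : ℕ) = n - 1
          have hn : (i₀ : ℕ) < n := i₀.isLt
          simp at h
          omega
    · rintro ⟨i, j⟩ hβ j' hlt
      induction i using Fin.cases with
      | zero =>
        simp only [mkT_zero]
        exact Gβ j (by simpa using hβ) j' hlt
      | succ i₀ =>
        induction j using Fin.lastCases with
        | last => simp at hβ
        | cast j₀ =>
          obtain ⟨j₀', rfl⟩ := Fin.exists_castSucc_eq.mpr
            (Fin.ne_last_of_lt (lt_trans hlt (Fin.castSucc_lt_last j₀)))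
          simp only [mkT_succ_cast]
          exact S3 (i₀, j₀) (by simpa using hβ) j₀' (Fin.castSucc_lt_castSucc_iff.mp hlt)
    · rintro ⟨i, j⟩ hα i' hlt
      induction i using Fin.cases with
      | zero => exact absurd hlt (Fin.not_lt_zero i')
      | succ i₀ =>
        induction j using Fin.lastCases with
        | last => simp at hα
        | cast j₀ =>
          induction i' using Fin.cases with
          | zero =>
            simp only [mkT_zero]
            exact GB j₀.castSucc ⟨j₀, rfl, i₀, by simpa using hα⟩
          | succ i₀' =>
            simp only [mkT_succ_cast]
            exact S4 (i₀, j₀) (by simpa using hα) i₀' (Fin.succ_lt_succ_iff.mp hlt)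

lemma mkT_recon {n : ℕ} (f : Fin (n+1) × Fin (n+1) → Option (Fin 2))
    (hf : IsABStaircase (n+1) f) :
    mkT (fun q => f (q.1.succ, q.2.castSucc)) (fun j => f (0, j)) = f := by
  obtain ⟨F1, -, -, -⟩ := hf
  funext p
  obtain ⟨i, j⟩ := p
  induction i using Fin.cases with
  | zero => simp
  | succ i₀ =>
    induction j using Fin.lastCases with
    | last =>
      rw [mkT_succ_last]
      refine (F1 (i₀.succ, Fin.last n) ?_).symm
      simp

    | cast j₀ => simp

lemma mkT_inj {n : ℕ} : Function.Injective
    (fun p : (Fin n × Fin n → Option (Fin 2)) × (Fin (n+1) → Option (Fin 2)) => mkT p.1 p.2) := by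
  rintro ⟨S1, g1⟩ ⟨S2, g2⟩ h
  simp only [Prod.mk.injEq]
  constructor
  · funext q
    have := congrFun h (q.1.succ, q.2.castSucc)
    simpa using this
  · funext j
    have := congrFun h (0, j)
    simpa using this

lemma noA_mk {n : ℕ} (S : Fin n × Fin n → Option (Fin 2)) (g : Fin (n+1) → Option (Fin 2)) :
    noA (mkT S g) = wtB (colB S) g := by
  unfold noA wtB
  apply Finset.sum_congr rfl
  intro j _
  congr 1
  apply propext
  constructor
  · intro h
    refine ⟨?_, h 0⟩
    rintro ⟨j₀, rfl, i₀, hα⟩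
    exact h i₀.succ (by simpa using hα)
  · rintro ⟨hB, hg⟩ i
    induction i using Fin.cases with
    | zero => exact hg
    | succ i₀ =>
      induction j using Fin.lastCases with
      | last => simp
      | cast j₀ =>
        simp only [mkT_succ_cast]
        intro hα
        exact hB ⟨j₀, rfl, i₀, hα⟩

lemma KB_colB {n : ℕ} (S : Fin n × Fin n → Option (Fin 2)) :
    KB (colB S) = noA S + 1 := by
  unfold KB noA
  rw [Fin.sum_univ_castSucc]
  have h1 : ∀ j₀ : Fin n, (if ¬ colB S j₀.castSucc then 1 else 0)
      = if (∀ i, S (i, j₀) ≠ some 0) then 1 else 0 := by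
    intro j₀
    congr 1
    apply propext
    unfold colB
    constructor
    · intro h i hα
      exact h ⟨j₀, rfl, i, hα⟩
    · rintro h ⟨j₀', hc, i₀, hα⟩
      have : j₀' = j₀ := Fin.castSucc_injective n hc
      subst this
      exact h i₀ hα
  have h2 : ¬ colB S (Fin.last n) := by
    rintro ⟨j₀, hc, -⟩
    exact absurd hc (Fin.ne_last_of_lt (Fin.castSucc_lt_last j₀))
  rw [Finset.sum_congr rfl (fun j₀ _ => h1 j₀), if_pos h2]

lemma colB_last {n : ℕ} (S : Fin n × Fin n → Option (Fin 2)) : ¬ colB S (Fin.last n) := by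
  rintro ⟨j₀, hc, -⟩
  exact absurd hc (Fin.ne_last_of_lt (Fin.castSucc_lt_last j₀))

lemma mainSum : ∀ (n : ℕ) (y : ℕ),
    (∑ f : Fin n × Fin n → Option (Fin 2), if IsABStaircase n f then y ^ noA f else 0)
      = ∏ m ∈ Finset.range n, (m + 1 + y) := by
  intro n
  induction n with
  | zero =>
    intro y
    have h1 : ∀ f : Fin 0 × Fin 0 → Option (Fin 2),
        (if IsABStaircase 0 f then y ^ noA f else 0) = 1 := by
      intro f
      rw [if_pos ⟨fun p => p.1.elim0, fun p => p.1.elim0, fun p => p.1.elim0, fun p => p.1.elim0⟩]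
      unfold noA
      simp
    rw [Finset.sum_congr rfl (fun f _ => h1 f)]
    simp
  | succ n ih =>
    intro y
    have hzero : ∀ f ∈ (Finset.univ : Finset (Fin (n+1) × Fin (n+1) → Option (Fin 2))),
        f ∉ Finset.image
          (fun p : (Fin n × Fin n → Option (Fin 2)) × (Fin (n+1) → Option (Fin 2)) => mkT p.1 p.2)
          Finset.univ →
        (if IsABStaircase (n+1) f then y ^ noA f else 0) = 0 := by
      intro f _ hf
      rw [if_neg]
      intro hv
      exact hf (Finset.mem_image.mpr ⟨((fun q => f (q.1.succ, q.2.castSucc)), (fun j => f (0, j))),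
        Finset.mem_univ _, mkT_recon f hv⟩)
    rw [← Finset.sum_subset (Finset.subset_univ _) hzero,
      Finset.sum_image (fun p _ q _ h => mkT_inj h), Fintype.sum_prod_type]
    have inner : ∀ S : Fin n × Fin n → Option (Fin 2),
        (∑ g : Fin (n+1) → Option (Fin 2),
          if IsABStaircase (n+1) (mkT S g) then y ^ noA (mkT S g) else 0)
        = if IsABStaircase n S then (1+y) ^ (noA S + 1) else 0 := by
      intro S
      by_cases hS : IsABStaircase n S
      · rw [if_pos hS, ← KB_colB S, ← Vlemma y n (colB S) inferInstance (colB_last S)]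
        apply Finset.sum_congr rfl
        intro g _
        rw [noA_mk]
        refine if_congr ?_ rfl rfl
        rw [valid_mk]
        simp [hS]
      · rw [if_neg hS]
        apply Finset.sum_eq_zero
        intro g _
        rw [if_neg]
        intro hv
        exact hS ((valid_mk S g).mp hv).1
    rw [Finset.sum_congr rfl (fun S _ => inner S)]
    have step : ∀ S : Fin n × Fin n → Option (Fin 2),
        (if IsABStaircase n S then (1+y) ^ (noA S + 1) else 0)
        = (1+y) * (if IsABStaircase n S then (1+y) ^ (noA S) else 0) := by
      intro S
      by_cases hS : IsABStaircase n S <;> simp [hS, pow_succ, mul_comm]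
    rw [Finset.sum_congr rfl (fun S _ => step S), ← Finset.mul_sum, ih (1+y),
      Finset.prod_range_succ']
    have : ∀ m, m + 1 + (1 + y) = m + 1 + 1 + y := by intro m; ring
    rw [Finset.prod_congr rfl (fun m _ => this m)]
    ring

lemma prod_aux : ∀ n : ℕ, ∏ m ∈ Finset.range n, (m + 2) = Nat.factorial (n + 1) := by
  intro n
  induction n with
  | zero => rfl
  | succ n ih =>
    rw [Finset.prod_range_succ, ih, Nat.factorial_succ (n+1)]
    ring


/-- The number of αβ-staircase tableaux of size `n` is `(n+1)!`. -/
theorem card_ABStaircase (n : ℕ) :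
    Fintype.card {f : Fin n × Fin n → Option (Fin 2) // IsABStaircase n f} =
      Nat.factorial (n + 1) := by
  have h := mainSum n 1
  simp only [one_pow] at h
  rw [Fintype.card_subtype, Finset.card_filter, h, ← prod_aux n]
end

section
/- The number of staircase tableaux of size n (with fillings from {α, β, γ, δ}) is 4^n · n!. -/
/-- A staircase tableau of size `n`, encoded as a filling of the boxes
`(i, j)` with `i + j ≤ n - 1` of the staircase Young diagram of shape
`(n, n-1, …, 1)` (box `(i,j)` is the `j`-th box of row `i`; drawn in Russian
notation, the "top row" consists of the boxes with `i + j = n - 1`, and the two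
families of diagonals become the rows and the columns).  Each box is empty
(`none`) or contains one of α, β, γ, δ (`some 0`, `some 1`, `some 2`, `some 3`
respectively), such that:
(1) no box in the top row is empty;
(2) each box southeast of a β or δ in the same diagonal (i.e. in the same row,
strictly before it) is empty;
(3) each box southwest of an α or γ in the same diagonal (i.e. in the same
column, strictly before it) is empty. -/
def IsStaircase (n : ℕ) (f : Fin n × Fin n → Option (Fin 4)) : Prop :=
  (∀ p : Fin n × Fin n, n ≤ (p.1 : ℕ) + (p.2 : ℕ) → f p = none) ∧
  (∀ p : Fin n × Fin n, (p.1 : ℕ) + (p.2 : ℕ) = n - 1 → f p ≠ none) ∧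
  (∀ p : Fin n × Fin n, (f p = some 1 ∨ f p = some 3) →
    ∀ j' : Fin n, j' < p.2 → f (p.1, j') = none) ∧
  (∀ p : Fin n × Fin n, (f p = some 0 ∨ f p = some 2) →
    ∀ i' : Fin n, i' < p.1 → f (i', p.2) = none)

instance (n : ℕ) : DecidablePred (IsStaircase n) := fun _ => by
  unfold IsStaircase; infer_instance

/-!
Refine the count by a parameter `X ≥ 1`: let `Z(X, n)` count staircase tableaux of size `n`
together with a label `< X` on every column that holds no α and no γ.  Then
`Z(X, n + 1) = (2X + 2) · Z(X + 2, n)`, whence `Z(X, n) = ∏_{i<n} (2X + 4i + 2)` and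
`Z(1, n) = 4^n · n!`.

For the recursion, split off the row `0` (the boxes `(0, j)`, `j ≤ n`) of a tableau of size
`n + 1`.  The rest is a tableau of size `n`, and the row is constrained only by the set `B` of
columns holding an α or γ higher up (these boxes of the row are empty) and by the rule that a β or
δ of the row must be its leftmost filled box.  Swap the leftmost filled box with the box `(0, n)`.
The box now at `(0, n)`, with its label, is one of `2X + 2` filled cells; every other box `(0, j)`,
`j < n`, `j ∉ B`, is one of `X + 2` states: empty with a label `< X`, α or γ.  These states are
exactly the labels of the column `j` for the parameter `X + 2`.  The swap can be undone: the
leftmost filled box is the first column whose state is α or γ, or `n` if there is none.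
-/

namespace Staircase

section FindOr

variable (p : ℕ → Prop) [DecidablePred p] (n : ℕ)

def findOr : ℕ := Nat.find (⟨n, Or.inr rfl⟩ : ∃ j, p j ∨ j = n)

variable {p n}

lemma findOr_le : findOr p n ≤ n := Nat.find_le (Or.inr rfl)

lemma findOr_spec : p (findOr p n) ∨ findOr p n = n :=
  Nat.find_spec (⟨n, Or.inr rfl⟩ : ∃ j, p j ∨ j = n)

lemma not_of_lt_findOr {j : ℕ} (hj : j < findOr p n) : ¬ p j :=
  fun h => Nat.find_min _ hj (Or.inl h)

lemma findOr_eq {m : ℕ} (hm : p m ∨ m = n) (hlt : ∀ j < m, ¬ p j) (hmn : m ≤ n) :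
    findOr p n = m :=
  (Nat.find_eq_iff _).mpr ⟨hm, fun j hj h => h.elim (hlt j hj) (by omega)⟩

end FindOr

def IsAlphaOrGamma (o : Option (Fin 4)) : Prop := o = some 0 ∨ o = some 2

def IsBetaOrDelta (o : Option (Fin 4)) : Prop := o = some 1 ∨ o = some 3

lemma IsAlphaOrGamma.ne_none {o : Option (Fin 4)} (h : IsAlphaOrGamma o) : o ≠ none := by
  rcases h with rfl | rfl <;> simp

lemma IsBetaOrDelta.ne_none {o : Option (Fin 4)} (h : IsBetaOrDelta o) : o ≠ none := by
  rcases h with rfl | rfl <;> simp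

lemma isAlphaOrGamma_of_ne_none {o : Option (Fin 4)} (h : o ≠ none) (h' : ¬ IsBetaOrDelta o) :
    IsAlphaOrGamma o := by
  unfold IsAlphaOrGamma
  unfold IsBetaOrDelta at h'
  rcases o with _ | v
  · exact absurd rfl h
  · fin_cases v <;> simp_all

section Cells

/- Codes `< 2X + 2` correspond to filled cells (letter, label `< X`, label `0` under α or γ);
states `< X + 2` to cells without β or δ (label `< X`, label `0` if filled). -/

variable (X : ℕ)

def codeLetter (c : ℕ) : Option (Fin 4) :=
  if c = 0 then some 0 else if c = 1 then some 2 else if c < X + 2 then some 1 else some 3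

def codeLabel (c : ℕ) : ℕ :=
  if c < 2 then 0 else if c < X + 2 then c - 2 else c - (X + 2)

def cellCode (o : Option (Fin 4)) (l : ℕ) : ℕ :=
  if o = some 0 then 0 else if o = some 2 then 1 else if o = some 1 then 2 + l else X + 2 + l

def stateLetter (s : ℕ) : Option (Fin 4) :=
  if s < X then none else if s = X then some 0 else some 2

def stateLabel (s : ℕ) : ℕ := if s < X then s else 0

def cellState (o : Option (Fin 4)) (l : ℕ) : ℕ :=
  if o = some 0 then X else if o = some 2 then X + 1 else l

variable {X} {o : Option (Fin 4)} {l c s : ℕ}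

lemma codeLetter_cellCode (ho : o ≠ none) (hl : l < X) : codeLetter X (cellCode X o l) = o := by
  rcases o with _ | v
  · exact absurd rfl ho
  · fin_cases v <;> simp only [codeLetter, cellCode] <;> split_ifs <;> simp_all <;> omega

lemma codeLabel_cellCode (hl : l < X) (hαγ : IsAlphaOrGamma o → l = 0) :
    codeLabel X (cellCode X o l) = l := by
  unfold IsAlphaOrGamma at hαγ
  rcases o with _ | v
  · simp only [codeLabel, cellCode, reduceCtorEq, if_false]; split_ifs <;> omega
  · fin_cases v <;> simp only [codeLabel, cellCode] <;> split_ifs <;> simp_all <;> omega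

lemma cellCode_lt (hl : l < X) : cellCode X o l < 2 * X + 2 := by
  unfold cellCode; split_ifs <;> omega

lemma cellCode_codeLetter (hc : c < 2 * X + 2) :
    cellCode X (codeLetter X c) (codeLabel X c) = c := by
  unfold codeLetter codeLabel; split_ifs <;> simp [cellCode] <;> omega

lemma codeLetter_ne_none (c : ℕ) : codeLetter X c ≠ none := by
  unfold codeLetter; split_ifs <;> simp

lemma codeLabel_lt (hc : c < 2 * X + 2) (hX : 0 < X) : codeLabel X c < X := by
  unfold codeLabel; split_ifs <;> omega

lemma codeLabel_eq_zero (h : IsAlphaOrGamma (codeLetter X c)) : codeLabel X c = 0 := by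
  unfold IsAlphaOrGamma codeLetter at h
  unfold codeLabel; split_ifs at h ⊢ <;> simp_all

lemma stateLetter_cellState (ho : ¬ IsBetaOrDelta o) (hl : l < X) (hαγ : o ≠ none → l = 0) :
    stateLetter X (cellState X o l) = o := by
  unfold IsBetaOrDelta at ho
  rcases o with _ | v
  · simp [stateLetter, cellState, hl]
  · fin_cases v <;> simp_all [stateLetter, cellState]

lemma stateLabel_cellState (hl : l < X) (hαγ : o ≠ none → l = 0) :
    stateLabel X (cellState X o l) = l := by
  unfold stateLabel cellState; split_ifs <;> simp_all

lemma cellState_lt (hl : l < X) : cellState X o l < X + 2 := by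
  unfold cellState; split_ifs <;> omega

lemma le_cellState (h : IsAlphaOrGamma o) : X ≤ cellState X o l := by
  rcases h with rfl | rfl <;> simp [cellState]

lemma cellState_stateLetter (hs : s < X + 2) :
    cellState X (stateLetter X s) (stateLabel X s) = s := by
  unfold stateLetter stateLabel; split_ifs <;> simp [cellState] <;> omega

lemma stateLetter_eq_none_iff : stateLetter X s = none ↔ s < X := by
  unfold stateLetter; split_ifs <;> simp_all

lemma not_isBetaOrDelta_stateLetter (s : ℕ) : ¬ IsBetaOrDelta (stateLetter X s) := by
  unfold IsBetaOrDelta stateLetter; split_ifs <;> simp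

lemma stateLabel_lt (hX : 0 < X) : stateLabel X s < X := by
  unfold stateLabel; split_ifs <;> omega

lemma stateLabel_eq_zero (h : stateLetter X s ≠ none) : stateLabel X s = 0 := by
  unfold stateLabel; rw [Ne, stateLetter_eq_none_iff] at h; simp [h]

end Cells

section Row

structure IsFirstRow (n : ℕ) (B : ℕ → Prop) (r : ℕ → Option (Fin 4)) : Prop where
  eq_none_of_lt : ∀ j, n < j → r j = none
  ne_none : r n ≠ none
  eq_none_of_isBetaOrDelta : ∀ j j', IsBetaOrDelta (r j) → j' < j → r j' = none
  eq_none_of_mem : ∀ j, B j → r j = none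

structure IsLabelling (X n : ℕ) (B : ℕ → Prop) (g : ℕ → ℕ) : Prop where
  lt : ∀ j, g j < X
  eq_zero_of_le : ∀ j, n ≤ j → g j = 0
  eq_zero_of_mem : ∀ j, B j → g j = 0

abbrev rowStart (n : ℕ) (r : ℕ → Option (Fin 4)) : ℕ := findOr (fun j => r j ≠ none) n

abbrev stateStart (X n : ℕ) (s : ℕ → ℕ) : ℕ := findOr (fun j => X ≤ s j) n

def encodeRow (X n : ℕ) (r : ℕ → Option (Fin 4)) (g : ℕ → ℕ) : ℕ × (ℕ → ℕ) :=
  let σ := Equiv.swap (rowStart n r) n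
  (cellCode X (r (σ n)) (g (σ n)),
    fun j => if j < n then cellState X (r (σ j)) (g (σ j)) else 0)

def decodeRow (X n c : ℕ) (s : ℕ → ℕ) : (ℕ → Option (Fin 4)) × (ℕ → ℕ) :=
  let σ := Equiv.swap (stateStart X n s) n
  (fun j => if σ j = n then codeLetter X c else if σ j < n then stateLetter X (s (σ j)) else none,
    fun j => if σ j = n then codeLabel X c else if σ j < n then stateLabel X (s (σ j)) else 0)

variable {X n c : ℕ} {B : ℕ → Prop} {r : ℕ → Option (Fin 4)} {g s : ℕ → ℕ} {j : ℕ}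

lemma eq_none_of_lt_rowStart (hj : j < rowStart n r) : r j = none :=
  not_not.mp (not_of_lt_findOr hj)

namespace IsFirstRow

lemma ne_none_rowStart (hr : IsFirstRow n B r) : r (rowStart n r) ≠ none :=
  findOr_spec.elim id fun h => by rw [rowStart, h]; exact hr.ne_none

lemma not_isBetaOrDelta (hr : IsFirstRow n B r) (hj : j ≠ rowStart n r) :
    ¬ IsBetaOrDelta (r j) := by
  intro hβδ
  rcases lt_or_gt_of_ne hj with hlt | hgt
  · exact not_of_lt_findOr hlt hβδ.ne_none
  · exact hr.ne_none_rowStart (hr.eq_none_of_isBetaOrDelta j _ hβδ hgt)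

lemma isAlphaOrGamma_of_rowStart_lt (hr : IsFirstRow n B r) (h : rowStart n r < n) :
    IsAlphaOrGamma (r n) :=
  isAlphaOrGamma_of_ne_none hr.ne_none (hr.not_isBetaOrDelta h.ne')

end IsFirstRow

lemma encodeRow_fst_lt (hg : ∀ j, g j < X) : (encodeRow X n r g).1 < 2 * X + 2 :=
  cellCode_lt (hg _)

lemma isLabelling_encodeRow (hr : IsFirstRow n B r)
    (hg : IsLabelling X (n + 1) (fun j => IsAlphaOrGamma (r j) ∨ B j) g) :
    IsLabelling (X + 2) n B (encodeRow X n r g).2 := by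
  refine ⟨fun j => ?_, fun j hj => ?_, fun j hj => ?_⟩
  · simp only [encodeRow]
    split_ifs
    · exact cellState_lt (hg.lt _)
    · omega
  · simp [encodeRow, not_lt.mpr hj]
  · have hjm : j ≠ rowStart n r := fun h => hr.ne_none_rowStart (h ▸ hr.eq_none_of_mem j hj)
    simp only [encodeRow]
    split_ifs with hjn
    · rw [Equiv.swap_apply_of_ne_of_ne hjm hjn.ne, hr.eq_none_of_mem j hj,
        hg.eq_zero_of_mem j (Or.inr hj)]
      simp [cellState]
    · rfl

lemma stateStart_le : stateStart X n s ≤ n := findOr_le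

lemma lt_of_lt_stateStart (hj : j < stateStart X n s) : s j < X :=
  not_le.mp (not_of_lt_findOr (p := fun j => X ≤ s j) hj)

lemma le_of_stateStart_lt (h : stateStart X n s < n) : X ≤ s (stateStart X n s) :=
  findOr_spec.resolve_right h.ne

lemma decodeRow_stateStart :
    (decodeRow X n c s).1 (stateStart X n s) = codeLetter X c ∧
      (decodeRow X n c s).2 (stateStart X n s) = codeLabel X c := by
  simp [decodeRow]

lemma decodeRow_of_lt (hj : j < n) (hjm : j ≠ stateStart X n s) :
    (decodeRow X n c s).1 j = stateLetter X (s j) ∧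
      (decodeRow X n c s).2 j = stateLabel X (s j) := by
  simp [decodeRow, Equiv.swap_apply_of_ne_of_ne hjm hj.ne, hj, hj.ne]

lemma decodeRow_last (h : stateStart X n s < n) :
    (decodeRow X n c s).1 n = stateLetter X (s (stateStart X n s)) ∧
      (decodeRow X n c s).2 n = stateLabel X (s (stateStart X n s)) := by
  simp [decodeRow, h, h.ne]

lemma decodeRow_of_gt (hj : n < j) :
    (decodeRow X n c s).1 j = none ∧ (decodeRow X n c s).2 j = 0 := by
  have hσ : Equiv.swap (stateStart X n s) n j = j :=
    Equiv.swap_apply_of_ne_of_ne (by have := stateStart_le (X := X) (n := n) (s := s); omega) hj.ne'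
  simp [decodeRow, hσ, hj.ne', not_lt.mpr hj.le]

lemma ne_stateStart_of_mem (hX : 0 < X) (hB : ∀ j, B j → j < n)
    (hs : IsLabelling (X + 2) n B s) (hj : B j) : j ≠ stateStart X n s := by
  rintro rfl
  have := le_of_stateStart_lt (hB _ hj)
  have := hs.eq_zero_of_mem _ hj
  omega

lemma isFirstRow_decodeRow (hX : 0 < X) (hB : ∀ j, B j → j < n)
    (hs : IsLabelling (X + 2) n B s) : IsFirstRow n B (decodeRow X n c s).1 := by
  have hmn : stateStart X n s ≤ n := stateStart_le
  refine ⟨fun j hj => (decodeRow_of_gt hj).1, ?_, fun j j' hβδ hj' => ?_, fun j hj => ?_⟩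
  · rcases hmn.lt_or_eq with hlt | heq
    · rw [(decodeRow_last hlt).1, Ne, stateLetter_eq_none_iff, not_lt]
      exact le_of_stateStart_lt hlt
    · have h := (decodeRow_stateStart (X := X) (n := n) (c := c) (s := s)).1
      rw [heq] at h
      rw [h]
      exact codeLetter_ne_none c
  · obtain rfl : j = stateStart X n s := by
      by_contra hjm
      rcases lt_trichotomy j n with hjn | rfl | hjn
      · exact not_isBetaOrDelta_stateLetter _ ((decodeRow_of_lt hjn hjm).1 ▸ hβδ)
      · exact not_isBetaOrDelta_stateLetter _
          ((decodeRow_last (lt_of_le_of_ne hmn (Ne.symm hjm))).1 ▸ hβδ)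
      · exact hβδ.ne_none (decodeRow_of_gt hjn).1
    rw [(decodeRow_of_lt (by omega) hj'.ne).1, stateLetter_eq_none_iff]
    exact lt_of_lt_stateStart hj'
  · rw [(decodeRow_of_lt (hB j hj) (ne_stateStart_of_mem hX hB hs hj)).1,
      hs.eq_zero_of_mem j hj, stateLetter_eq_none_iff]
    exact hX

lemma isLabelling_decodeRow (hX : 0 < X) (hB : ∀ j, B j → j < n) (hc : c < 2 * X + 2)
    (hs : IsLabelling (X + 2) n B s) :
    IsLabelling X (n + 1) (fun j => IsAlphaOrGamma ((decodeRow X n c s).1 j) ∨ B j)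
      (decodeRow X n c s).2 := by
  refine ⟨fun j => ?_, fun j hj => (decodeRow_of_gt hj).2, fun j hj => ?_⟩
  · simp only [decodeRow]
    split_ifs
    · exact codeLabel_lt hc hX
    · exact stateLabel_lt hX
    · exact hX
  · rcases hj with hαγ | hj
    · simp only [decodeRow] at hαγ ⊢
      split_ifs at hαγ ⊢
      · exact codeLabel_eq_zero hαγ
      · exact stateLabel_eq_zero hαγ.ne_none
      · rfl
    · rw [(decodeRow_of_lt (hB j hj) (ne_stateStart_of_mem hX hB hs hj)).2,
        hs.eq_zero_of_mem j hj]
      simp [stateLabel, hX]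

lemma stateStart_encodeRow (hr : IsFirstRow n B r)
    (hg : IsLabelling X (n + 1) (fun j => IsAlphaOrGamma (r j) ∨ B j) g) :
    stateStart X n (encodeRow X n r g).2 = rowStart n r := by
  set m := rowStart n r with hm
  have hmn : m ≤ n := findOr_le
  refine findOr_eq ?_ (fun j hj => ?_) hmn
  · rcases hmn.lt_or_eq with hlt | heq
    · left
      simp only [encodeRow, ← hm, if_pos hlt, Equiv.swap_apply_left]
      exact le_cellState (hr.isAlphaOrGamma_of_rowStart_lt hlt)
    · exact Or.inr heq
  · simp only [encodeRow, ← hm, if_pos (by omega : j < n),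
      Equiv.swap_apply_of_ne_of_ne hj.ne (by omega : j ≠ n), eq_none_of_lt_rowStart hj]
    simpa [cellState] using hg.lt j

lemma decodeRow_encodeRow (hr : IsFirstRow n B r)
    (hg : IsLabelling X (n + 1) (fun j => IsAlphaOrGamma (r j) ∨ B j) g) :
    decodeRow X n (encodeRow X n r g).1 (encodeRow X n r g).2 = (r, g) := by
  have hstart := stateStart_encodeRow hr hg
  set m := rowStart n r with hm
  have hcell : ∀ j, j ≠ m → stateLetter X (cellState X (r j) (g j)) = r j ∧
      stateLabel X (cellState X (r j) (g j)) = g j := fun j hjm => by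
    have hβδ := hr.not_isBetaOrDelta hjm
    have hαγ : r j ≠ none → g j = 0 := fun h =>
      hg.eq_zero_of_mem j (Or.inl (isAlphaOrGamma_of_ne_none h hβδ))
    exact ⟨stateLetter_cellState hβδ (hg.lt j) hαγ, stateLabel_cellState (hg.lt j) hαγ⟩
  have hσ : ∀ k, k ≠ n → Equiv.swap m n k ≠ m := fun k hk => by
    rwa [Ne, Equiv.swap_apply_eq_iff, Equiv.swap_apply_left]
  have hσ_gt : ∀ k, n < k → Equiv.swap m n k = k := fun k hk =>
    Equiv.swap_apply_of_ne_of_ne (by have : m ≤ n := findOr_le; omega) hk.ne'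
  refine Prod.ext (funext fun j => ?_) (funext fun j => ?_) <;>
    obtain ⟨k, rfl⟩ := (Equiv.swap m n).surjective j <;>
    simp only [decodeRow] <;> rw [hstart] <;>
    simp only [encodeRow, ← hm, Equiv.swap_apply_self] <;>
    split_ifs with hkn hk
  · rw [hkn, Equiv.swap_apply_right]
    exact codeLetter_cellCode hr.ne_none_rowStart (hg.lt m)
  · exact (hcell _ (hσ k hkn)).1
  · rw [hσ_gt k (by omega), hr.eq_none_of_lt k (by omega)]
  · rw [hkn, Equiv.swap_apply_right]
    exact codeLabel_cellCode (hg.lt m) fun h => hg.eq_zero_of_mem m (Or.inl h)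
  · exact (hcell _ (hσ k hkn)).2
  · rw [hσ_gt k (by omega), hg.eq_zero_of_le k (by omega)]

lemma rowStart_decodeRow : rowStart n (decodeRow X n c s).1 = stateStart X n s :=
  findOr_eq (Or.inl (decodeRow_stateStart.1 ▸ codeLetter_ne_none c))
    (fun j hj => by
      rw [not_not, (decodeRow_of_lt (hj.trans_le stateStart_le) hj.ne).1,
        stateLetter_eq_none_iff]
      exact lt_of_lt_stateStart hj)
    stateStart_le

lemma encodeRow_decodeRow (hc : c < 2 * X + 2) (hs : IsLabelling (X + 2) n B s) :
    encodeRow X n (decodeRow X n c s).1 (decodeRow X n c s).2 = (c, s) := by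
  refine Prod.ext ?_ (funext fun k => ?_) <;> simp only [encodeRow] <;> rw [rowStart_decodeRow] <;>
    simp only [decodeRow, Equiv.swap_apply_self]
  · exact cellCode_codeLetter hc
  · split_ifs with hk hkn
    · exact absurd hkn hk.ne
    · exact cellState_stateLetter (hs.lt k)
    · exact (hs.eq_zero_of_le k (not_lt.mp hk)).symm

end Row

section Tableau

/- `IsStaircase` for fillings of all of `ℕ × ℕ`, so that a row can be split off without
reindexing `Fin n`. -/
structure IsStaircaseFilling (n : ℕ) (F : ℕ → ℕ → Option (Fin 4)) : Prop where
  eq_none_of_le : ∀ i j, n ≤ i + j → F i j = none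
  ne_none_of_add_eq : ∀ i j, i + j + 1 = n → F i j ≠ none
  eq_none_of_isBetaOrDelta : ∀ i j j', IsBetaOrDelta (F i j) → j' < j → F i j' = none
  eq_none_of_isAlphaOrGamma : ∀ i j i', IsAlphaOrGamma (F i j) → i' < i → F i' j = none

def HasAlphaOrGamma (F : ℕ → ℕ → Option (Fin 4)) (j : ℕ) : Prop := ∃ i, IsAlphaOrGamma (F i j)

def consRow (r : ℕ → Option (Fin 4)) (F : ℕ → ℕ → Option (Fin 4)) : ℕ → ℕ → Option (Fin 4)
  | 0 => r
  | i + 1 => F i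

variable {n : ℕ} {r : ℕ → Option (Fin 4)} {F : ℕ → ℕ → Option (Fin 4)}

lemma consRow_head_tail (F : ℕ → ℕ → Option (Fin 4)) :
    consRow (F 0) (fun i => F (i + 1)) = F := by
  funext i
  cases i <;> rfl

lemma hasAlphaOrGamma_consRow :
    HasAlphaOrGamma (consRow r F) = fun j => IsAlphaOrGamma (r j) ∨ HasAlphaOrGamma F j := by
  ext j
  constructor
  · rintro ⟨_ | i, h⟩
    exacts [Or.inl h, Or.inr ⟨i, h⟩]
  · rintro (h | ⟨i, h⟩)
    exacts [⟨0, h⟩, ⟨i + 1, h⟩]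

lemma IsStaircaseFilling.lt_of_hasAlphaOrGamma (hF : IsStaircaseFilling n F) {j : ℕ}
    (hj : HasAlphaOrGamma F j) : j < n := by
  obtain ⟨i, h⟩ := hj
  by_contra hjn
  exact h.ne_none (hF.eq_none_of_le i j (by omega))

lemma isStaircaseFilling_consRow_iff :
    IsStaircaseFilling (n + 1) (consRow r F) ↔
      IsStaircaseFilling n F ∧ IsFirstRow n (HasAlphaOrGamma F) r := by
  constructor
  · intro h
    refine ⟨⟨fun i j hij => h.eq_none_of_le (i + 1) j (by omega),
      fun i j hij => h.ne_none_of_add_eq (i + 1) j (by omega),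
      fun i j j' => h.eq_none_of_isBetaOrDelta (i + 1) j j',
      fun i j i' hαγ hi' => h.eq_none_of_isAlphaOrGamma (i + 1) j (i' + 1) hαγ (by omega)⟩,
      ⟨fun j hj => h.eq_none_of_le 0 j (by omega), h.ne_none_of_add_eq 0 n (by omega),
      h.eq_none_of_isBetaOrDelta 0, fun j ⟨i, hαγ⟩ =>
        h.eq_none_of_isAlphaOrGamma (i + 1) j 0 hαγ (Nat.succ_pos i)⟩⟩
  · rintro ⟨hF, hr⟩
    refine ⟨fun i j hij => ?_, fun i j hij => ?_, fun i j j' => ?_, fun i j i' hαγ hi' => ?_⟩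
    · cases i
      exacts [hr.eq_none_of_lt j (by omega), hF.eq_none_of_le _ j (by omega)]
    · cases i
      exacts [show j = n by omega ▸ hr.ne_none, hF.ne_none_of_add_eq _ j (by omega)]
    · cases i
      exacts [hr.eq_none_of_isBetaOrDelta j j', hF.eq_none_of_isBetaOrDelta _ j j']
    · obtain _ | i := i
      · omega
      obtain _ | i' := i'
      · exact hr.eq_none_of_mem j ⟨i, hαγ⟩
      · exact hF.eq_none_of_isAlphaOrGamma i j i' hαγ (by omega)

def LabelledStaircase (X n : ℕ) : Type :=
  {p : (ℕ → ℕ → Option (Fin 4)) × (ℕ → ℕ) //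
    IsStaircaseFilling n p.1 ∧ IsLabelling X n (HasAlphaOrGamma p.1) p.2}

lemma isStaircaseFilling_succ_and_isLabelling_iff {X : ℕ} {g : ℕ → ℕ} :
    IsStaircaseFilling (n + 1) F ∧ IsLabelling X (n + 1) (HasAlphaOrGamma F) g ↔
      IsStaircaseFilling n (fun i => F (i + 1)) ∧
        IsFirstRow n (HasAlphaOrGamma fun i => F (i + 1)) (F 0) ∧
        IsLabelling X (n + 1)
          (fun j => IsAlphaOrGamma (F 0 j) ∨ HasAlphaOrGamma (fun i => F (i + 1)) j) g := by
  conv_lhs => rw [← consRow_head_tail F]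
  rw [isStaircaseFilling_consRow_iff, hasAlphaOrGamma_consRow, and_assoc]

def labelledStaircaseSuccEquiv {X : ℕ} (hX : 0 < X) :
    LabelledStaircase X (n + 1) ≃ Fin (2 * X + 2) × LabelledStaircase (X + 2) n where
  toFun p :=
    have h := isStaircaseFilling_succ_and_isLabelling_iff.mp p.2
    (⟨(encodeRow X n (p.1.1 0) p.1.2).1, encodeRow_fst_lt h.2.2.lt⟩,
      ⟨(fun i => p.1.1 (i + 1), (encodeRow X n (p.1.1 0) p.1.2).2),
        h.1, isLabelling_encodeRow h.2.1 h.2.2⟩)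
  invFun q :=
    have hB := fun _ => q.2.2.1.lt_of_hasAlphaOrGamma
    ⟨(consRow (decodeRow X n q.1 q.2.1.2).1 q.2.1.1, (decodeRow X n q.1 q.2.1.2).2),
      isStaircaseFilling_succ_and_isLabelling_iff.mpr ⟨q.2.2.1,
        isFirstRow_decodeRow hX hB q.2.2.2, isLabelling_decodeRow hX hB q.1.2 q.2.2.2⟩⟩
  left_inv p := by
    have h := isStaircaseFilling_succ_and_isLabelling_iff.mp p.2
    apply Subtype.ext
    simp only [decodeRow_encodeRow h.2.1 h.2.2, consRow_head_tail]
  right_inv q := by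
    have h := Prod.ext_iff.mp (encodeRow_decodeRow q.1.2 q.2.2.2)
    exact Prod.ext (Fin.ext h.1) (Subtype.ext (Prod.ext rfl h.2))

lemma card_labelledStaircase_zero {X : ℕ} (hX : 0 < X) : Nat.card (LabelledStaircase X 0) = 1 := by
  rw [Nat.card_eq_one_iff_unique]
  refine ⟨⟨fun p q => Subtype.ext (Prod.ext (funext₂ fun i j => ?_) (funext fun j => ?_))⟩,
    ⟨⟨(fun _ _ => none, fun _ => 0), ?_⟩⟩⟩
  · rw [p.2.1.eq_none_of_le i j (Nat.zero_le _), q.2.1.eq_none_of_le i j (Nat.zero_le _)]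
  · rw [p.2.2.eq_zero_of_le j (Nat.zero_le _), q.2.2.eq_zero_of_le j (Nat.zero_le _)]
  · exact ⟨⟨fun _ _ _ => rfl, fun _ _ h => by omega, fun _ _ _ _ _ => rfl, fun _ _ _ _ _ => rfl⟩,
      ⟨fun _ => hX, fun _ _ => rfl, fun _ _ => rfl⟩⟩

theorem card_labelledStaircase {X : ℕ} (hX : 0 < X) (n : ℕ) :
    Nat.card (LabelledStaircase X n) = ∏ i ∈ Finset.range n, (2 * X + 4 * i + 2) := by
  induction n generalizing X with
  | zero => simpa using card_labelledStaircase_zero hX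
  | succ n ih =>
    rw [Nat.card_congr (labelledStaircaseSuccEquiv hX), Nat.card_prod, Nat.card_eq_fintype_card,
      Fintype.card_fin, ih (by omega), Finset.prod_range_succ', mul_comm]
    congr 1
    exact Finset.prod_congr rfl fun i _ => by ring

end Tableau

section Extend

variable {n : ℕ} {f : Fin n × Fin n → Option (Fin 4)} {i j : ℕ}

def extend (f : Fin n × Fin n → Option (Fin 4)) : ℕ → ℕ → Option (Fin 4) :=
  fun i j => if h : i < n ∧ j < n then f (⟨i, h.1⟩, ⟨j, h.2⟩) else none

lemma extend_of_lt (hi : i < n) (hj : j < n) : extend f i j = f (⟨i, hi⟩, ⟨j, hj⟩) :=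
  dif_pos ⟨hi, hj⟩

lemma lt_of_extend_ne_none (h : extend f i j ≠ none) : i < n ∧ j < n :=
  not_not.mp fun h' => h (dif_neg h')

lemma isStaircase_iff_isStaircaseFilling_extend :
    IsStaircase n f ↔ IsStaircaseFilling n (extend f) := by
  constructor
  · rintro ⟨hout, htop, hβδ, hαγ⟩
    refine ⟨fun i j hij => ?_, fun i j hij => ?_, fun i j j' h hj' => ?_, fun i j i' h hi' => ?_⟩
    · by_contra h
      obtain ⟨hi, hj⟩ := lt_of_extend_ne_none h
      exact h (by rw [extend_of_lt hi hj]; exact hout _ hij)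
    · rw [extend_of_lt (by omega) (by omega)]
      exact htop _ (by simp; omega)
    · obtain ⟨hi, hj⟩ := lt_of_extend_ne_none h.ne_none
      rw [extend_of_lt hi hj] at h
      rw [extend_of_lt hi (hj'.trans hj)]
      exact hβδ _ h ⟨j', _⟩ hj'
    · obtain ⟨hi, hj⟩ := lt_of_extend_ne_none h.ne_none
      rw [extend_of_lt hi hj] at h
      rw [extend_of_lt (hi'.trans hi) hj]
      exact hαγ _ h ⟨i', _⟩ hi'
  · intro h
    refine ⟨fun p hp => ?_, fun p hp => ?_, fun p hp j' hj' => ?_, fun p hp i' hi' => ?_⟩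
    · simpa [extend_of_lt] using h.eq_none_of_le p.1 p.2 hp
    · simpa [extend_of_lt] using h.ne_none_of_add_eq p.1 p.2 (by omega)
    · simpa [extend_of_lt] using
        h.eq_none_of_isBetaOrDelta p.1 p.2 j' (by simpa [extend_of_lt]) hj'
    · simpa [extend_of_lt] using
        h.eq_none_of_isAlphaOrGamma p.1 p.2 i' (by simpa [extend_of_lt]) hi'

lemma extend_restrict {F : ℕ → ℕ → Option (Fin 4)} (hF : IsStaircaseFilling n F) :
    extend (fun p : Fin n × Fin n => F p.1 p.2) = F := by
  funext i j
  by_cases h : i < n ∧ j < n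
  · exact extend_of_lt h.1 h.2
  · rw [extend, dif_neg h, hF.eq_none_of_le i j (by omega)]

end Extend

def staircaseEquivLabelledStaircaseOne (n : ℕ) :
    {f : Fin n × Fin n → Option (Fin 4) // IsStaircase n f} ≃ LabelledStaircase 1 n where
  toFun f := ⟨(extend f.1, fun _ => 0), isStaircase_iff_isStaircaseFilling_extend.mp f.2,
    fun _ => Nat.one_pos, fun _ _ => rfl, fun _ _ => rfl⟩
  invFun p := ⟨fun q => p.1.1 q.1 q.2,
    isStaircase_iff_isStaircaseFilling_extend.mpr ((extend_restrict p.2.1).symm ▸ p.2.1)⟩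
  left_inv _ := Subtype.ext (funext fun q => extend_of_lt q.1.2 q.2.2)
  right_inv p := Subtype.ext (Prod.ext (extend_restrict p.2.1)
    (funext fun j => (Nat.lt_one_iff.mp (p.2.2.lt j)).symm))

end Staircase

/-- The number of staircase tableaux of size `n` is `4^n · n!`. -/
theorem card_staircase (n : ℕ) :
    Fintype.card {f : Fin n × Fin n → Option (Fin 4) // IsStaircase n f} =
      4 ^ n * Nat.factorial n := by
  rw [Fintype.card_eq_nat_card, Nat.card_congr (Staircase.staircaseEquivLabelledStaircaseOne n),
    Staircase.card_labelledStaircase Nat.one_pos]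
  calc ∏ i ∈ Finset.range n, (2 * 1 + 4 * i + 2)
      = ∏ i ∈ Finset.range n, 4 * (i + 1) := Finset.prod_congr rfl fun i _ => by ring
    _ = 4 ^ n * n.factorial := by
      rw [Finset.prod_mul_distrib, Finset.prod_const, Finset.card_range,
        Finset.prod_range_add_one_eq_factorial]
end

section
/- Matrix Ansatz (Derrida–Evans–Hakim–Pasquier): Suppose D and E are (possibly infinite) matrices, ⟨W| a row vector, |V⟩ a column vector, and c ≠ 0 a constant satisfying DE − qED = c(D+E), βD|V⟩ = c|V⟩, and α⟨W|E = c⟨W|, with ⟨W|(D+E)^n|V⟩ ≠ 0. Then for the open-boundary ASEP on n sites, the assignment π(τ) = ⟨W| ∏_{i=1}^n (τ_i D + (1−τ_i)E) |V⟩ / ⟨W|(D+E)^n|V⟩ (identifying τ ∈ {0,1}^n with a particle configuration) defines the stationary distribution: it satisfies the global balance equations of the chain. -/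
/-!
Let `f(τ) = ⟨W| ∏ᵢ (τᵢ D + (1 - τᵢ) E) |V⟩` be the unnormalised weight and, for a site `k`, let
`h(k) = ±c · f(τ with site k erased)`, with sign `+` iff `k` is occupied. The relation
`DE - qED = c(D + E)` makes the net flux into `τ` across the bond `(k, k+1)` equal to
`h(k+1) - h(k)`; `α⟨W|E = c⟨W|` makes the net flux through the entry equal to `h` of the first
site, and `βD|V⟩ = c|V⟩` makes the one through the exit `-h` of the last site. The total net flux
telescopes to zero, which is global balance.
-/

open Finset

/-- The transition probability `Pr(τ → σ)` (for `σ ≠ τ`) of the open-boundary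
ASEP on `n + 1` sites: a particle hops right with probability `1/(n+2)`, hops
left with probability `q/(n+2)`, enters at the first site with probability
`α/(n+2)` when it is empty, and exits at the last site with probability
`β/(n+2)` when it is occupied.  (States are `{0,1}`-configurations, encoded as
functions `Fin (n+1) → Bool` with `true` = particle.) -/
noncomputable def asepRate (n : ℕ) (α β q : ℝ) (τ σ : Fin (n + 1) → Bool) : ℝ :=
  (1 / (n + 2)) *
    ((∑ i : Fin n, if τ i.castSucc = true ∧ τ i.succ = false ∧
        σ = Function.update (Function.update τ i.castSucc false) i.succ true
        then (1 : ℝ) else 0) +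
     (∑ i : Fin n, if τ i.castSucc = false ∧ τ i.succ = true ∧
        σ = Function.update (Function.update τ i.castSucc true) i.succ false
        then q else 0) +
     (if τ 0 = false ∧ σ = Function.update τ 0 true then α else 0) +
     (if τ (Fin.last n) = true ∧ σ = Function.update τ (Fin.last n) false then β else 0))

open Function Matrix

lemma Fin.sum_succ_sub_castSucc {M : Type*} [AddCommGroup M] {n : ℕ} (f : Fin (n + 1) → M) :
    ∑ i : Fin n, (f i.succ - f i.castSucc) = f (Fin.last n) - f 0 := by
  induction n with
  | zero => simp
  | succ m ih =>
    rw [Fin.sum_univ_castSucc]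
    simp only [Fin.succ_castSucc, Fin.succ_last]
    rw [ih fun j => f j.castSucc, Fin.castSucc_zero]
    abel

lemma List.ofFn_update {α : Type*} {m : ℕ} (f : Fin m → α) (i : Fin m) (x : α) :
    List.ofFn (update f i x) = (List.ofFn f).set i x := by
  apply List.ext_getElem (by simp)
  intro k hk _
  simp [List.getElem_set, update_apply, Fin.ext_iff, eq_comm]

lemma List.eq_take_append_getElem_cons_getElem_cons_drop {α : Type*} (l : List α) (i : ℕ)
    (hi : i + 1 < l.length) :
    l = l.take i ++ l[i] :: l[i + 1] :: l.drop (i + 2) := by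
  rw [← List.drop_eq_getElem_cons hi, ← List.drop_eq_getElem_cons, List.take_append_drop]

lemma List.exists_ofFn_eq_append_cons_cons {α : Type*} {n : ℕ} (τ : Fin (n + 1) → α) (i : Fin n) :
    ∃ a b : List α, a.length = i ∧ List.ofFn τ = a ++ τ i.castSucc :: τ i.succ :: b := by
  refine ⟨(List.ofFn τ).take i, (List.ofFn τ).drop (i + 2), by simp; omega, ?_⟩
  convert List.eq_take_append_getElem_cons_getElem_cons_drop (List.ofFn τ) i (by simp) using 4 <;>
    simp only [List.getElem_ofFn] <;> rfl

section Update

variable {α β : Type*} [DecidableEq α] {σ τ : α → β} {a b : α} {x y x' y' : β}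

lemma Function.eq_update_iff_eq_update :
    (σ a = x' ∧ τ = update σ a x) ↔ (τ a = x ∧ σ = update τ a x') := by
  constructor <;> rintro ⟨rfl, rfl⟩ <;> simp

lemma Function.eq_update_update_iff_eq_update_update (hab : a ≠ b) :
    (σ a = x' ∧ σ b = y' ∧ τ = update (update σ a x) b y) ↔
      (τ a = x ∧ τ b = y ∧ σ = update (update τ a x') b y') := by
  constructor <;> rintro ⟨rfl, rfl, rfl⟩ <;> simp [update_comm hab, hab]

lemma Function.ne_update_update_of_apply_ne (hab : a ≠ b) (h : τ a ≠ x) :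
    τ ≠ update (update τ a x) b y :=
  fun e => h (by simpa [hab] using congrFun e a)

end Update

lemma Fintype.sum_ite_and_eq {X M : Type*} [Fintype X] [DecidableEq X] [AddCommMonoid M]
    (P : Prop) [Decidable P] (x₀ : X) (f : X → M) :
    ∑ x, (if P ∧ x = x₀ then f x else 0) = if P then f x₀ else 0 := by
  simp only [ite_and, Finset.sum_ite_irrel, Fintype.sum_ite_eq', Finset.sum_const_zero]

namespace ASEP

section Word

variable {R : Type*} [CommRing R] {ι : Type*} [Fintype ι] [DecidableEq ι]
  (D E : Matrix ι ι R) (W V : ι → R)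

def wordMatrix (l : List Bool) : Matrix ι ι R :=
  (l.map fun b => if b then D else E).prod

def wordWeight (l : List Bool) : R :=
  W ᵥ* wordMatrix D E l ⬝ᵥ V

@[simp]
lemma wordMatrix_append (a b : List Bool) :
    wordMatrix D E (a ++ b) = wordMatrix D E a * wordMatrix D E b := by
  simp [wordMatrix]

@[simp]
lemma wordMatrix_cons (x : Bool) (l : List Bool) :
    wordMatrix D E (x :: l) = (if x then D else E) * wordMatrix D E l := by
  simp [wordMatrix]

@[simp]
lemma wordMatrix_nil : wordMatrix D E [] = 1 := rfl

variable {D E W V} {q c α β : R}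

lemma wordWeight_bond (hDE : D * E - q • (E * D) = c • (D + E)) (a b : List Bool) :
    wordWeight D E W V (a ++ true :: false :: b) - q * wordWeight D E W V (a ++ false :: true :: b)
      = c * (wordWeight D E W V (a ++ true :: b) + wordWeight D E W V (a ++ false :: b)) := by
  have h : wordMatrix D E (a ++ true :: false :: b) - q • wordMatrix D E (a ++ false :: true :: b)
      = c • (wordMatrix D E (a ++ true :: b) + wordMatrix D E (a ++ false :: b)) := by
    calc _ = wordMatrix D E a * (D * E - q • (E * D)) * wordMatrix D E b := by
          simp [Matrix.mul_sub, Matrix.sub_mul, Matrix.mul_assoc]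
      _ = _ := by simp [hDE, Matrix.mul_add, Matrix.add_mul, Matrix.mul_assoc]
  simpa [wordWeight, Matrix.vecMul_sub, Matrix.vecMul_add, Matrix.vecMul_smul, sub_dotProduct,
    add_dotProduct, mul_add] using congrArg (fun M => W ᵥ* M ⬝ᵥ V) h

lemma wordWeight_append_true (hV : β • (D *ᵥ V) = c • V) (a : List Bool) :
    β * wordWeight D E W V (a ++ [true]) = c * wordWeight D E W V a := by
  have h : wordMatrix D E (a ++ [true]) = wordMatrix D E a * D := by simp
  rw [wordWeight, wordWeight, h, ← vecMul_vecMul, ← dotProduct_mulVec, ← smul_eq_mul,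
    ← dotProduct_smul, hV, dotProduct_smul, smul_eq_mul]

lemma wordWeight_false_cons (hW : α • (W ᵥ* E) = c • W) (b : List Bool) :
    α * wordWeight D E W V (false :: b) = c * wordWeight D E W V b := by
  rw [wordWeight, wordWeight, wordMatrix_cons, if_neg Bool.false_ne_true, ← vecMul_vecMul,
    ← smul_eq_mul, ← smul_dotProduct, ← smul_vecMul, hW, smul_vecMul, smul_dotProduct, smul_eq_mul]

end Word

variable {R : Type*} [CommRing R] {n : ℕ}

def escapeRate (α β q : R) (τ : Fin (n + 1) → Bool) : R :=
  (∑ i : Fin n, if τ i.castSucc = true ∧ τ i.succ = false then 1 else 0) +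
  (∑ i : Fin n, if τ i.castSucc = false ∧ τ i.succ = true then q else 0) +
  (if τ 0 = false then α else 0) + (if τ (Fin.last n) = true then β else 0)

def inflow (α β q : R) (g : (Fin (n + 1) → Bool) → R) (τ : Fin (n + 1) → Bool) : R :=
  (∑ i : Fin n, if τ i.castSucc = false ∧ τ i.succ = true then
    g (update (update τ i.castSucc true) i.succ false) else 0) +
  (∑ i : Fin n, if τ i.castSucc = true ∧ τ i.succ = false then
    g (update (update τ i.castSucc false) i.succ true) * q else 0) +
  (if τ 0 = true then g (update τ 0 false) * α else 0) +
  (if τ (Fin.last n) = false then g (update τ (Fin.last n) true) * β else 0)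

lemma asepRate_self (α β q : ℝ) (τ : Fin (n + 1) → Bool) : asepRate n α β q τ τ = 0 := by
  have hne (i : Fin n) (x y : Bool) (h : τ i.castSucc ≠ x) :
      τ ≠ update (update τ i.castSucc x) i.succ y :=
    ne_update_update_of_apply_ne Fin.castSucc_lt_succ.ne h
  rw [asepRate, sum_eq_zero fun i _ => if_neg fun h => hne i false true (by simp [h.1]) h.2.2,
    sum_eq_zero fun i _ => if_neg fun h => hne i true false (by simp [h.1]) h.2.2]
  simp

lemma sum_asepRate (α β q : ℝ) (τ : Fin (n + 1) → Bool) :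
    ∑ σ, asepRate n α β q τ σ = escapeRate α β q τ / (n + 2) := by
  simp only [asepRate, escapeRate, ← Finset.mul_sum, Finset.sum_add_distrib,
    Finset.sum_comm (s := (univ : Finset (Fin (n + 1) → Bool))), ← and_assoc,
    Fintype.sum_ite_and_eq]
  ring

lemma asepRate_eq_sum_reverse_moves (α β q : ℝ) (σ τ : Fin (n + 1) → Bool) :
    asepRate n α β q σ τ = (1 / (n + 2)) *
    ((∑ i : Fin n, if τ i.castSucc = false ∧ τ i.succ = true ∧
        σ = update (update τ i.castSucc true) i.succ false then (1 : ℝ) else 0) +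
     (∑ i : Fin n, if τ i.castSucc = true ∧ τ i.succ = false ∧
        σ = update (update τ i.castSucc false) i.succ true then q else 0) +
     (if τ 0 = true ∧ σ = update τ 0 false then α else 0) +
     (if τ (Fin.last n) = false ∧ σ = update τ (Fin.last n) true then β else 0)) := by
  simp only [asepRate, eq_update_iff_eq_update,
    eq_update_update_iff_eq_update_update Fin.castSucc_lt_succ.ne]

lemma sum_mul_asepRate (α β q : ℝ) (g : (Fin (n + 1) → Bool) → ℝ) (τ : Fin (n + 1) → Bool) :
    ∑ σ, g σ * asepRate n α β q σ τ = inflow α β q g τ / (n + 2) := by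
  simp only [asepRate_eq_sum_reverse_moves, mul_left_comm (g _), ← Finset.mul_sum]
  rw [one_div_mul_eq_div]
  congr 1
  simp only [inflow, mul_add, Finset.sum_add_distrib, Finset.mul_sum, mul_ite, mul_zero, mul_one,
    Finset.sum_comm (s := (univ : Finset (Fin (n + 1) → Bool))), ← and_assoc,
    Fintype.sum_ite_and_eq]

section Balance

variable {ι : Type*} [Fintype ι] [DecidableEq ι] {D E : Matrix ι ι R} {W V : ι → R} {q c α β : R}

variable (D E W V) in
def configWeight {m : ℕ} (σ : Fin m → Bool) : R := wordWeight D E W V (List.ofFn σ)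

-- The term `h(k)` of the telescoping argument.
variable (D E W V c) in
def signedErasedWeight (τ : Fin (n + 1) → Bool) (k : Fin (n + 1)) : R :=
  (if τ k then c else -c) * wordWeight D E W V ((List.ofFn τ).eraseIdx k)

lemma bond_balance (hDE : D * E - q • (E * D) = c • (D + E)) (τ : Fin (n + 1) → Bool)
    (i : Fin n) :
    (if τ i.castSucc = false ∧ τ i.succ = true then
        configWeight D E W V (update (update τ i.castSucc true) i.succ false) else 0) +
      (if τ i.castSucc = true ∧ τ i.succ = false then
        configWeight D E W V (update (update τ i.castSucc false) i.succ true) * q else 0) -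
      configWeight D E W V τ * ((if τ i.castSucc = true ∧ τ i.succ = false then 1 else 0) +
        (if τ i.castSucc = false ∧ τ i.succ = true then q else 0)) =
      signedErasedWeight D E W V c τ i.succ - signedErasedWeight D E W V c τ i.castSucc := by
  obtain ⟨a, b, ha, hτ⟩ := List.exists_ofFn_eq_append_cons_cons τ i
  have hset (x y : Bool) :
      List.ofFn (update (update τ i.castSucc x) i.succ y) = a ++ x :: y :: b := by
    rw [List.ofFn_update, List.ofFn_update, hτ]
    simp [← ha]
  have herase₁ : (a ++ τ i.castSucc :: τ i.succ :: b).eraseIdx a.length = a ++ τ i.succ :: b := by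
    simp [List.eraseIdx_append]
  have herase₂ :
      (a ++ τ i.castSucc :: τ i.succ :: b).eraseIdx (a.length + 1) = a ++ τ i.castSucc :: b := by
    simp [List.eraseIdx_append]
  simp only [configWeight, signedErasedWeight, hset, hτ, Fin.val_castSucc, Fin.val_succ, ← ha,
    herase₁, herase₂]
  cases τ i.castSucc <;> cases τ i.succ <;>
    simp only [Bool.false_eq_true, Bool.true_eq_false, and_self, and_true, and_false, ↓reduceIte]
  · ring
  · linear_combination wordWeight_bond hDE a b
  · linear_combination -wordWeight_bond hDE a b
  · ring

lemma entry_balance (hW : α • (W ᵥ* E) = c • W) (τ : Fin (n + 1) → Bool) :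
    (if τ 0 = true then configWeight D E W V (update τ 0 false) * α else 0) -
      configWeight D E W V τ * (if τ 0 = false then α else 0) =
      signedErasedWeight D E W V c τ 0 := by
  obtain ⟨b, hτ⟩ : ∃ b, List.ofFn τ = τ 0 :: b := ⟨_, List.ofFn_succ⟩
  have hset (x : Bool) : List.ofFn (update τ 0 x) = x :: b := by
    rw [List.ofFn_update, hτ]
    rfl
  simp only [configWeight, signedErasedWeight, hset, hτ, Fin.val_zero, List.eraseIdx_cons_zero]
  cases τ 0 <;> simp only [Bool.false_eq_true, Bool.true_eq_false, ↓reduceIte]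
  · linear_combination -wordWeight_false_cons (V := V) (D := D) hW b
  · linear_combination wordWeight_false_cons (V := V) (D := D) hW b

lemma exit_balance (hV : β • (D *ᵥ V) = c • V) (τ : Fin (n + 1) → Bool) :
    (if τ (Fin.last n) = false then configWeight D E W V (update τ (Fin.last n) true) * β else 0) -
      configWeight D E W V τ * (if τ (Fin.last n) = true then β else 0) =
      -signedErasedWeight D E W V c τ (Fin.last n) := by
  obtain ⟨a, hτ⟩ : ∃ a, List.ofFn τ = a ++ [τ (Fin.last n)] :=
    ⟨_, by rw [List.ofFn_succ', List.concat_eq_append]⟩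
  have ha : a.length = n := by simpa using (congrArg List.length hτ).symm
  have herase : (a ++ [τ (Fin.last n)]).eraseIdx n = a := by simp [List.eraseIdx_append, ha]
  have hset (x : Bool) : List.ofFn (update τ (Fin.last n) x) = a ++ [x] := by
    rw [List.ofFn_update, hτ]
    simp [← ha]
  simp only [configWeight, signedErasedWeight, hset, hτ, Fin.val_last, herase]
  cases τ (Fin.last n) <;> simp only [Bool.false_eq_true, Bool.true_eq_false, ↓reduceIte]
  · linear_combination wordWeight_append_true (W := W) (E := E) hV a
  · linear_combination -wordWeight_append_true (W := W) (E := E) hV a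

theorem inflow_configWeight (hDE : D * E - q • (E * D) = c • (D + E))
    (hV : β • (D *ᵥ V) = c • V) (hW : α • (W ᵥ* E) = c • W) (τ : Fin (n + 1) → Bool) :
    inflow α β q (configWeight D E W V) τ = configWeight D E W V τ * escapeRate α β q τ := by
  have hbulk := Fin.sum_succ_sub_castSucc (signedErasedWeight D E W V c τ)
  rw [← Finset.sum_congr rfl fun i _ => bond_balance hDE τ i] at hbulk
  simp only [Finset.sum_sub_distrib, Finset.sum_add_distrib, ← Finset.mul_sum] at hbulk
  rw [inflow, escapeRate]
  linear_combination hbulk + entry_balance hW τ + exit_balance hV τ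

end Balance

end ASEP

open ASEP

theorem matrix_ansatz_general (n : ℕ) (α β q : ℝ)
    {ι : Type*} [Fintype ι] [DecidableEq ι]
    (D E : Matrix ι ι ℝ) (W V : ι → ℝ) (c : ℝ)
    (hDE : D * E - q • (E * D) = c • (D + E))
    (hV : β • (Matrix.mulVec D V) = c • V)
    (hW : α • (Matrix.vecMul W E) = c • W)
    (π : (Fin (n + 1) → Bool) → ℝ)
    (hπ : ∀ τ, π τ =
      dotProduct
        (Matrix.vecMul W ((List.ofFn (fun i : Fin (n + 1) =>
          if τ i then D else E)).prod)) V /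
      dotProduct (Matrix.vecMul W ((D + E) ^ (n + 1))) V) :
    ∀ τ : Fin (n + 1) → Bool,
      π τ * ∑ σ ∈ univ.filter (fun σ => σ ≠ τ), asepRate n α β q τ σ =
        ∑ σ ∈ univ.filter (fun σ => σ ≠ τ), π σ * asepRate n α β q σ τ := by
  intro τ
  have hπ' : π = fun σ => configWeight D E W V σ / (W ᵥ* ((D + E) ^ (n + 1)) ⬝ᵥ V) := by
    funext σ
    rw [hπ σ, configWeight, wordWeight, wordMatrix, List.map_ofFn]
    rfl
  rw [filter_ne', sum_erase _ (asepRate_self α β q τ),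
    sum_erase _ (by rw [asepRate_self, mul_zero]), sum_asepRate, hπ']
  simp only [div_mul_eq_mul_div, ← sum_div, sum_mul_asepRate, inflow_configWeight hDE hV hW]
  ring

/-- The Matrix Ansatz of Derrida–Evans–Hakim–Pasquier: if matrices `D`, `E`, a
row vector `W`, a column vector `V` and a constant `c ≠ 0` satisfy
`DE − qED = c(D + E)`, `βD|V⟩ = c|V⟩` and `α⟨W|E = c⟨W|`, with
`⟨W|(D+E)^(n+1)|V⟩ ≠ 0`, then
`π(τ) = ⟨W| ∏ᵢ (τᵢ D + (1−τᵢ)E) |V⟩ / ⟨W|(D+E)^(n+1)|V⟩` satisfies the global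
balance equations of the open-boundary ASEP on `n + 1` sites. -/
theorem matrix_ansatz (n : ℕ) (α β q : ℝ)
    (hα : 0 < α) (hα1 : α < 1) (hβ : 0 < β) (hβ1 : β < 1) (hq : 0 < q) (hq1 : q < 1)
    {ι : Type*} [Fintype ι] [DecidableEq ι]
    (D E : Matrix ι ι ℝ) (W V : ι → ℝ) (c : ℝ) (hc : c ≠ 0)
    (hDE : D * E - q • (E * D) = c • (D + E))
    (hV : β • (Matrix.mulVec D V) = c • V)
    (hW : α • (Matrix.vecMul W E) = c • W)
    (hZ : dotProduct (Matrix.vecMul W ((D + E) ^ (n + 1))) V ≠ 0)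
    (π : (Fin (n + 1) → Bool) → ℝ)
    (hπ : ∀ τ, π τ =
      dotProduct
        (Matrix.vecMul W ((List.ofFn (fun i : Fin (n + 1) =>
          if τ i then D else E)).prod)) V /
      dotProduct (Matrix.vecMul W ((D + E) ^ (n + 1))) V) :
    ∀ τ : Fin (n + 1) → Bool,
      π τ * ∑ σ ∈ univ.filter (fun σ => σ ≠ τ), asepRate n α β q τ σ =
        ∑ σ ∈ univ.filter (fun σ => σ ≠ τ), π σ * asepRate n α β q σ τ :=
  matrix_ansatz_general n α β q D E W V c hDE hV hW π hπ
end

section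
/- The explicit matrices D₁ (upper triangular with d_{i,i+1} = α and all other entries 0) and E₁ (lower triangular with e_{ij} = β^{i−j+1}(q^{j−1}·C(i−1, j−1) + α·∑_{r=0}^{j−2} C(i−j+r, r) q^r) for j ≤ i, and 0 for j > i), together with ⟨W₁| = (1,0,0,…) and |V₁⟩ = (1,1,1,…)ᵗ, satisfy the Matrix Ansatz relations: D₁E₁ − qE₁D₁ = αβ(D₁+E₁), βD₁|V₁⟩ = αβ|V₁⟩, and α⟨W₁|E₁ = αβ⟨W₁|. -/
/-- The matrix `D₁` (indexed by positive integers, here 0-based: entry `(i, j)`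
corresponds to `(i+1, j+1)`): `d_{i,i+1} = α` and all other entries `0`. -/
noncomputable def D1 (α : ℝ) : ℕ → ℕ → ℝ := fun i j => if j = i + 1 then α else 0

/-- The matrix `E₁` (0-based indexing as above): lower triangular with
`e_{ij} = β^{i−j+1} (q^{j−1} C(i−1,j−1) + α ∑_{r=0}^{j−2} C(i−j+r,r) q^r)`
for `j ≤ i` (in 1-based indices) and `0` above the diagonal. -/
noncomputable def E1 (α β q : ℝ) : ℕ → ℕ → ℝ := fun i j =>
  if j ≤ i then
    β ^ (i - j + 1) *
      (q ^ j * (Nat.choose i j : ℝ) +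
        α * ∑ r ∈ Finset.range j, (Nat.choose (i - j + r) r : ℝ) * q ^ r)
  else 0

/-- The row vector `⟨W₁| = (1, 0, 0, …)`. -/
noncomputable def W1 : ℕ → ℝ := fun i => if i = 0 then 1 else 0

/-- The column vector `|V₁⟩ = (1, 1, 1, …)ᵗ`. -/
noncomputable def V1 : ℕ → ℝ := fun _ => 1

/-!
Since `D₁` is a shift scaled by `α`, multiplying by it just moves entries, and every relation
becomes an identity between entries of `E₁` in neighbouring rows and columns. On the diagonal
it is a geometric sum; below the diagonal it is Pascal's rule, applied both to the binomial
`C(i, j)` and, term by term, to the coefficients `C(i - j + r, r)` of the `α`-sum.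
-/

open Finset

theorem sum_choose_succ_mul_pow_sub_mul {R : Type*} [CommRing R] (q : R) (d m : ℕ) :
    ∑ r ∈ range (m + 1), ((d + 1 + r).choose r : R) * q ^ r
      - q * ∑ r ∈ range m, ((d + 1 + r).choose r : R) * q ^ r
    = ∑ r ∈ range (m + 1), ((d + r).choose r : R) * q ^ r := by
  induction m with
  | zero => simp
  | succ m ih =>
    have pascal : ((d + 1 + (m + 1)).choose (m + 1) : R)
        = (d + 1 + m).choose m + (d + (m + 1)).choose (m + 1) := by
      rw [show d + 1 + (m + 1) = d + m + 1 + 1 by omega, Nat.choose_succ_succ',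
        show d + 1 + m = d + m + 1 by omega, show d + (m + 1) = d + m + 1 by omega]
      push_cast
      ring
    have split := sum_range_succ (fun r => ((d + 1 + r).choose r : R) * q ^ r) m
    rw [sum_range_succ _ (m + 1), sum_range_succ _ (m + 1)]
    linear_combination ih + q ^ (m + 1) * pascal - q * split

section Entries

variable {α β q : ℝ}

theorem E1_of_eq_add {i j d : ℕ} (h : i = j + d) :
    E1 α β q i j
      = β ^ (d + 1) * (q ^ j * i.choose j + α * ∑ r ∈ range j, ((d + r).choose r : ℝ) * q ^ r) := by
  subst h
  simp [E1]

theorem E1_of_lt {i j : ℕ} (h : i < j) : E1 α β q i j = 0 := by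
  simp [E1, h.not_ge]

theorem tsum_D1_mul (i : ℕ) (f : ℕ → ℝ) : ∑' k, D1 α i k * f k = α * f (i + 1) := by
  rw [tsum_eq_single (i + 1) fun k hk => by simp [D1, hk]]
  simp [D1]

theorem tsum_mul_D1_zero (f : ℕ → ℝ) : ∑' k, f k * D1 α k 0 = 0 := by
  simp [D1]

theorem tsum_mul_D1_succ (j : ℕ) (f : ℕ → ℝ) : ∑' k, f k * D1 α k (j + 1) = f j * α := by
  rw [tsum_eq_single j fun k hk => by simp [D1, Ne.symm hk]]
  simp [D1]

theorem tsum_W1_mul (f : ℕ → ℝ) : ∑' i, W1 i * f i = f 0 := by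
  rw [tsum_eq_single 0 fun k hk => by simp [W1, hk]]
  simp [W1]

end Entries

section Commutation

variable (α β q : ℝ)

theorem commutation_entry_zero (i : ℕ) :
    α * E1 α β q (i + 1) 0 = α * β * (D1 α i 0 + E1 α β q i 0) := by
  rw [E1_of_eq_add (d := i + 1) (by omega), E1_of_eq_add (d := i) (by omega)]
  simp [D1]
  ring

theorem commutation_entry_succ (i m : ℕ) :
    α * E1 α β q (i + 1) (m + 1) - q * (E1 α β q i m * α)
      = α * β * (D1 α i (m + 1) + E1 α β q i (m + 1)) := by
  rcases lt_trichotomy i m with hlt | rfl | hgt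
  · simp [E1_of_lt hlt, E1_of_lt (Nat.succ_lt_succ hlt), E1_of_lt (hlt.trans m.lt_succ_self), D1,
      hlt.ne']
  · rw [E1_of_eq_add (i := i + 1) (j := i + 1) (d := 0) rfl,
      E1_of_eq_add (i := i) (j := i) (d := 0) rfl,
      E1_of_lt i.lt_succ_self]
    simp only [D1, if_true, zero_add, add_zero, Nat.choose_self, Nat.cast_one, one_mul,
      geom_sum_succ]
    ring
  · obtain ⟨d, rfl⟩ : ∃ d, i = m + 1 + d := ⟨i - (m + 1), by omega⟩
    rw [E1_of_eq_add (d := d + 1) (by omega), E1_of_eq_add (d := d + 1) (by omega),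
      E1_of_eq_add (d := d) rfl, Nat.choose_succ_succ', D1, if_neg (by omega)]
    push_cast
    linear_combination α ^ 2 * β ^ (d + 2) * sum_choose_succ_mul_pow_sub_mul q d m

end Commutation

/-- The explicit matrices `D₁`, `E₁` and vectors `⟨W₁|`, `|V₁⟩` satisfy the
Matrix Ansatz relations with `c = αβ`:
`D₁E₁ − q E₁D₁ = αβ(D₁ + E₁)`, `β D₁|V₁⟩ = αβ|V₁⟩`, `α ⟨W₁|E₁ = αβ ⟨W₁|`.
(All matrix-vector products are written entrywise via `tsum`; every sum has
only finitely many nonzero terms.) -/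
theorem matrix_ansatz_solution (α β q : ℝ) :
    (∀ i j : ℕ,
      (∑' k : ℕ, D1 α i k * E1 α β q k j) - q * (∑' k : ℕ, E1 α β q i k * D1 α k j)
        = α * β * (D1 α i j + E1 α β q i j)) ∧
    (∀ i : ℕ, β * (∑' j : ℕ, D1 α i j * V1 j) = α * β * V1 i) ∧
    (∀ j : ℕ, α * (∑' i : ℕ, W1 i * E1 α β q i j) = α * β * W1 j) := by
  refine ⟨fun i j => ?_, fun i => ?_, fun j => ?_⟩
  · rw [tsum_D1_mul]
    cases j with
    | zero => simpa [tsum_mul_D1_zero] using commutation_entry_zero α β q i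
    | succ m => rw [tsum_mul_D1_succ]; exact commutation_entry_succ α β q i m
  · simp only [tsum_D1_mul, V1]
    ring
  · rw [tsum_W1_mul]
    cases j with
    | zero => simp [E1_of_eq_add (i := 0) (d := 0) rfl, W1]
    | succ m => simp [E1_of_lt m.succ_pos, W1]
end

section
/- Markov Chain Tree Theorem: For a finite-state irreducible Markov chain with transition matrix P, define for each state τ the quantity Ψ(τ) = ∑_{T rooted at τ} ∏_{(i→j) ∈ T} P(i,j), where the sum is over all spanning trees of the state diagram directed toward the root τ. Then the vector (Ψ(τ))_τ is a left eigenvector of P with eigenvalue 1; i.e., the stationary distribution is π(τ) = Ψ(τ)/∑_σ Ψ(σ). -/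
open Finset
open scoped Classical

/-- `T : V → V` encodes a spanning tree of the state diagram of `P` rooted at
`r`, directed toward the root: each non-root vertex `v` has exactly one
outgoing edge `v → T v`, which must be an edge of the state diagram
(`P v (T v) > 0`, `T v ≠ v`); the root has no outgoing edge (`T r = r`); and
there are no cycles: every vertex reaches the root by iterating `T`. -/
def IsSpanningTreeRootedAt {V : Type*} [Fintype V] [DecidableEq V]
    (P : Matrix V V ℝ) (r : V) (T : V → V) : Prop :=
  T r = r ∧ (∀ v, v ≠ r → 0 < P v (T v) ∧ T v ≠ v) ∧ (∀ v, ∃ k, T^[k] v = r)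

/-- The tree-sum `Ψ(r) = ∑_{T rooted at r} ∏_{v ≠ r} P v (T v)`, summing the
products of the transition probabilities along the edges of each spanning tree
of the state diagram rooted at (and directed toward) `r`. -/
noncomputable def treeMeasure {V : Type*} [Fintype V] [DecidableEq V]
    (P : Matrix V V ℝ) (r : V) : ℝ :=
  ∑ T : V → V, if IsSpanningTreeRootedAt P r T then
    ∏ v ∈ univ.filter (fun v => v ≠ r), P v (T v) else 0

set_option linter.unusedSectionVars false

namespace MCTT

variable {V : Type*} [Fintype V] [DecidableEq V]

/-- every vertex reaches `r` by iterating `f` -/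
def Reach (f : V → V) (r : V) : Prop := ∀ v, ∃ k, f^[k] v = r

/-- weak spanning-tree predicate (no positivity requirement) -/
def W (r : V) (T : V → V) : Prop := T r = r ∧ Reach T r

lemma fix_iterate (f : V → V) (a : V) (h : f a = a) : ∀ k, f^[k] a = a := by
  intro k
  induction k with
  | zero => rfl
  | succ k ih => rw [Function.iterate_succ_apply', ih, h]

lemma iterate_update_eq (f : V → V) (a b v : V) (k : ℕ)
    (h : ∀ i < k, f^[i] v ≠ a) : (Function.update f a b)^[k] v = f^[k] v := by
  induction k with
  | zero => rfl
  | succ k ih =>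
    rw [Function.iterate_succ_apply', Function.iterate_succ_apply',
      ih (fun i hi => h i (Nat.lt_succ_of_lt hi)),
      Function.update_of_ne (h k (Nat.lt_succ_self k))]

lemma hit_update (f : V → V) (a b v : V) (h : ∃ k, f^[k] v = a) :
    ∃ k, (Function.update f a b)^[k] v = a :=
  ⟨Nat.find h, by
    rw [iterate_update_eq f a b v _ (fun i hi => Nat.find_min h hi)]
    exact Nat.find_spec h⟩

lemma update_self_eq {g : V → V} {a : V} (ha : g a = a) : Function.update g a a = g := by
  funext x
  by_cases hx : x = a
  · subst hx; simp [ha]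
  · simp [Function.update_of_ne hx]

/-- the predecessor of `r` on the unique cycle through `r` -/
noncomputable def pred (f : V → V) (r : V) : V :=
  if h : ∃ k, f^[k] (f r) = r then f^[Nat.find h] r else r

lemma pred_spec {f : V → V} {r : V} (h : ∃ k, f^[k] (f r) = r) :
    f (pred f r) = r := by
  rw [pred, dif_pos h]
  have hs := Nat.find_spec h
  rw [← Function.iterate_succ_apply, Function.iterate_succ_apply'] at hs
  exact hs

lemma pred_update {T : V → V} {σ r : V} (hW : W σ T) :
    pred (Function.update T σ r) r = σ := by
  by_cases hστ : σ = r
  · subst hστ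
    rw [update_self_eq hW.1, pred]
    have h : ∃ k, T^[k] (T σ) = σ := ⟨0, by simp [hW.1]⟩
    rw [dif_pos h]
    have h0 : Nat.find h = 0 := by rw [Nat.find_eq_zero]; simp [hW.1]
    rw [h0]
    rfl
  · set f := Function.update T σ r with hf
    have reach : ∃ k, T^[k] r = σ := hW.2 r
    set n := Nat.find reach with hn
    have hTn : T^[n] r = σ := Nat.find_spec reach
    have C1 : ∀ i ≤ n, f^[i] r = T^[i] r := fun i hi =>
      iterate_update_eq T σ r r i (fun j hj => Nat.find_min reach (lt_of_lt_of_le hj hi))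
    have C2 : ∀ i, 0 < i → i ≤ n → T^[i] r ≠ r := by
      intro i hi0 hin hir
      have hmul : T^[i * n] r = r := by
        rw [Function.iterate_mul]
        exact fix_iterate _ _ hir n
      have hge : n ≤ i * n := Nat.le_mul_of_pos_left n hi0
      have hσ : T^[i * n] r = σ := by
        rw [show i * n = (i * n - n) + n from (Nat.sub_add_cancel hge).symm,
          Function.iterate_add_apply, hTn]
        exact fix_iterate T σ hW.1 _
      exact hστ (hσ.symm.trans hmul)
    have hspec_n : f^[n] (f r) = r := by
      have hh : f^[n+1] r = r := by
        rw [Function.iterate_succ_apply', C1 n le_rfl, hTn]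
        exact Function.update_self σ r T
      rwa [Function.iterate_succ_apply] at hh
    have h : ∃ k, f^[k] (f r) = r := ⟨n, hspec_n⟩
    have hle : Nat.find h ≤ n := Nat.find_le hspec_n
    have hfind : Nat.find h = n := by
      rcases eq_or_lt_of_le hle with he | hlt
      · exact he
      · exfalso
        have hk : f^[Nat.find h] (f r) = r := Nat.find_spec h
        rw [← Function.iterate_succ_apply] at hk
        have hC : f^[Nat.find h + 1] r = T^[Nat.find h + 1] r := C1 _ (by omega)
        rw [hC] at hk
        exact C2 (Nat.find h + 1) (Nat.succ_pos _) (by omega) hk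
    rw [pred, dif_pos h, hfind, C1 n le_rfl, hTn]

lemma reach_update_tree {T : V → V} {σ r : V} (hW : W σ T) :
    Reach (Function.update T σ r) r := by
  intro v
  obtain ⟨k, hk⟩ := hit_update T σ r v (hW.2 v)
  exact ⟨k + 1, by rw [Function.iterate_succ_apply', hk, Function.update_self]⟩

lemma W_of_reach {f : V → V} {r : V} (hf : Reach f r) :
    W (pred f r) (Function.update f (pred f r) (pred f r)) := by
  have h : ∃ k, f^[k] (f r) = r := hf (f r)
  refine ⟨Function.update_self _ _ _, fun v => ?_⟩
  have hv : ∃ k, f^[k] v = pred f r := by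
    obtain ⟨m, hm⟩ := hf v
    refine ⟨Nat.find h + m, ?_⟩
    rw [Function.iterate_add_apply, hm, pred, dif_pos h]
  exact hit_update f _ _ v hv

lemma weight_update (P : Matrix V V ℝ) (T : V → V) (σ b : V) :
    (∏ v ∈ univ.filter (fun v => v ≠ σ), P v (T v)) * P σ b
      = ∏ v, P v (Function.update T σ b v) := by
  rw [Finset.filter_ne', ← Finset.mul_prod_erase univ
      (fun v => P v (Function.update T σ b v)) (mem_univ σ), Function.update_self, mul_comm]
  congr 1
  refine prod_congr rfl fun v hv => ?_
  rw [Function.update_of_ne (mem_erase.mp hv).1]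

lemma treeMeasure_eq (P : Matrix V V ℝ) (hPnn : ∀ i j, 0 ≤ P i j) (r : V) :
    treeMeasure P r = ∑ T : V → V,
      if W r T then ∏ v ∈ univ.filter (fun v => v ≠ r), P v (T v) else 0 := by
  unfold treeMeasure
  refine sum_congr rfl fun T _ => ?_
  by_cases hT : IsSpanningTreeRootedAt P r T
  · rw [if_pos hT, if_pos ⟨hT.1, hT.2.2⟩]
  · rw [if_neg hT]
    by_cases hw : W r T
    · rw [if_pos hw]
      have hne : ∀ v, v ≠ r → T v ≠ v := by
        intro v hv hTv
        obtain ⟨k, hk⟩ := hw.2 v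
        rw [fix_iterate T v hTv k] at hk
        exact hv hk
      have hex : ∃ v, v ≠ r ∧ ¬ (0 < P v (T v)) := by
        by_contra hc
        push_neg at hc
        exact hT ⟨hw.1, fun v hv => ⟨hc v hv, hne v hv⟩, hw.2⟩
      obtain ⟨v, hv, hP⟩ := hex
      exact (Finset.prod_eq_zero (mem_filter.mpr ⟨mem_univ v, hv⟩)
        (le_antisymm (not_lt.mp hP) (hPnn v (T v)))).symm
    · rw [if_neg hw]

lemma step_right (P : Matrix V V ℝ) (hProw : ∀ i, ∑ j : V, P i j = 1) (τ : V) :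
    (∑ T : V → V, if W τ T then ∏ v ∈ univ.filter (fun v => v ≠ τ), P v (T v) else 0)
      = ∑ f ∈ univ.filter (fun f : V → V => Reach f τ), ∏ v, P v (f v) := by
  rw [← Finset.sum_filter]
  have h1 : ∀ T ∈ univ.filter (fun T : V → V => W τ T),
      (∏ v ∈ univ.filter (fun v => v ≠ τ), P v (T v))
        = ∑ j, (∏ v ∈ univ.filter (fun v => v ≠ τ), P v (T v)) * P τ j := by
    intro T _
    rw [← Finset.mul_sum, hProw, mul_one]
  rw [Finset.sum_congr rfl h1, ← Finset.sum_product']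
  refine Finset.sum_bij' (fun p _ => Function.update p.1 τ p.2)
    (fun f _ => (Function.update f τ τ, f τ)) ?_ ?_ ?_ ?_ ?_
  · intro p hp
    simp only [mem_filter, mem_univ, true_and]
    have hW : W τ p.1 := (mem_filter.mp (mem_product.mp hp).1).2
    exact fun v => hit_update p.1 τ p.2 v (hW.2 v)
  · intro f hf
    have hr : Reach f τ := (mem_filter.mp hf).2
    refine mem_product.mpr ⟨mem_filter.mpr ⟨mem_univ _, ?_, ?_⟩, mem_univ _⟩
    · exact Function.update_self _ _ _
    · exact fun v => hit_update f τ τ v (hr v)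
  · intro p hp
    have hW : W τ p.1 := (mem_filter.mp (mem_product.mp hp).1).2
    ext
    · simp only [Function.update_idem]
      exact congrFun (update_self_eq hW.1) _
    · simp [Function.update_self]
  · intro f hf
    dsimp only
    rw [Function.update_idem]
    exact Function.update_eq_self τ f
  · intro p hp
    exact weight_update P p.1 τ p.2

lemma step_left (P : Matrix V V ℝ) (τ : V) :
    (∑ σ : V, (∑ T : V → V,
        if W σ T then ∏ v ∈ univ.filter (fun v => v ≠ σ), P v (T v) else 0) * P σ τ)
      = ∑ f ∈ univ.filter (fun f : V → V => Reach f τ), ∏ v, P v (f v) := by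
  have h1 : ∀ σ : V, (∑ T : V → V,
        if W σ T then ∏ v ∈ univ.filter (fun v => v ≠ σ), P v (T v) else 0) * P σ τ
      = ∑ T : V → V, (if W σ T then
          (∏ v ∈ univ.filter (fun v => v ≠ σ), P v (T v)) * P σ τ else 0) := by
    intro σ
    rw [Finset.sum_mul]
    refine Finset.sum_congr rfl fun T _ => ?_
    split <;> simp
  rw [Finset.sum_congr rfl (fun σ _ => h1 σ), ← Finset.sum_product', ← Finset.sum_filter]
  refine Finset.sum_bij' (fun p _ => Function.update p.2 p.1 τ)
    (fun f _ => (pred f τ, Function.update f (pred f τ) (pred f τ))) ?_ ?_ ?_ ?_ ?_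
  · intro p hp
    have hW : W p.1 p.2 := (mem_filter.mp hp).2
    simp only [mem_filter, mem_univ, true_and]
    exact reach_update_tree hW
  · intro f hf
    have hr : Reach f τ := (mem_filter.mp hf).2
    exact mem_filter.mpr ⟨mem_product.mpr ⟨mem_univ _, mem_univ _⟩, W_of_reach hr⟩
  · intro p hp
    have hW : W p.1 p.2 := (mem_filter.mp hp).2
    have h1 : pred (Function.update p.2 p.1 τ) τ = p.1 := pred_update hW
    rw [h1, Function.update_idem, update_self_eq hW.1]
  · intro f hf
    have hr : Reach f τ := (mem_filter.mp hf).2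
    dsimp only
    rw [Function.update_idem]
    have hfp : f (pred f τ) = τ := pred_spec (hr (f τ))
    have he := Function.update_eq_self (pred f τ) f
    rw [hfp] at he
    exact he
  · intro p hp
    exact weight_update P p.2 p.1 τ

lemma pow_nonneg (P : Matrix V V ℝ) (hPnn : ∀ i j, 0 ≤ P i j) (k : ℕ) :
    ∀ i j, 0 ≤ (P ^ k) i j := by
  induction k with
  | zero => intro i j; rw [pow_zero]; by_cases h : i = j <;> simp [Matrix.one_apply, h]
  | succ k ih =>
    intro i j
    rw [pow_succ', Matrix.mul_apply]
    exact Finset.sum_nonneg fun l _ => mul_nonneg (hPnn i l) (ih l j)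

lemma exists_tree (P : Matrix V V ℝ) (hPnn : ∀ i j, 0 ≤ P i j)
    (hirr : ∀ i j : V, ∃ k : ℕ, 0 < (P ^ k) i j) (r : V) :
    ∃ T : V → V, IsSpanningTreeRootedAt P r T := by
  have key : ∀ v : V, v ≠ r → ∃ j, 0 < P v j ∧ Nat.find (hirr j r) < Nat.find (hirr v r) := by
    intro v hv
    have hn : Nat.find (hirr v r) ≠ 0 := by
      intro h0
      have := Nat.find_spec (hirr v r)
      rw [h0, pow_zero] at this
      simp [Matrix.one_apply, hv] at this
    obtain ⟨m, hm⟩ := Nat.exists_eq_succ_of_ne_zero hn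
    have hspec := Nat.find_spec (hirr v r)
    rw [hm, pow_succ', Matrix.mul_apply] at hspec
    obtain ⟨j, hj'⟩ : ∃ j : V, 0 < P v j * (P ^ m) j r := by
      by_contra hc
      push_neg at hc
      have hle : ∑ j : V, P v j * (P ^ m) j r ≤ 0 := Finset.sum_nonpos fun j _ => hc j
      exact absurd hspec (not_lt.mpr hle)
    have hPvj : 0 < P v j := by
      rcases lt_or_eq_of_le (hPnn v j) with h | h
      · exact h
      · rw [← h, zero_mul] at hj'; exact absurd hj' (lt_irrefl 0)
    have hPm : 0 < (P ^ m) j r := by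
      rcases lt_or_eq_of_le (pow_nonneg P hPnn m j r) with h | h
      · exact h
      · rw [← h, mul_zero] at hj'; exact absurd hj' (lt_irrefl 0)
    refine ⟨j, hPvj, lt_of_le_of_lt (Nat.find_le hPm) ?_⟩
    omega
  let T : V → V := fun v => if h : v = r then r else Classical.choose (key v h)
  have hTr : T r = r := by simp [T]
  have hTv : ∀ v, v ≠ r → 0 < P v (T v) ∧
      Nat.find (hirr (T v) r) < Nat.find (hirr v r) := by
    intro v hv
    simp only [T, dif_neg hv]
    exact Classical.choose_spec (key v hv)
  refine ⟨T, hTr, fun v hv => ⟨(hTv v hv).1, fun he => ?_⟩, fun v => ?_⟩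
  · have := (hTv v hv).2
    rw [he] at this
    exact lt_irrefl _ this
  · have main : ∀ n : ℕ, ∀ v : V, Nat.find (hirr v r) = n → ∃ k, T^[k] v = r := by
      intro n
      induction n using Nat.strong_induction_on with
      | _ n ih =>
        intro v hd
        by_cases hv : v = r
        · exact ⟨0, hv⟩
        · obtain ⟨k, hk⟩ := ih _ (hd ▸ (hTv v hv).2) (T v) rfl
          exact ⟨k + 1, by rw [Function.iterate_succ_apply, hk]⟩
    exact main _ v rfl

lemma treeMeasure_nonneg (P : Matrix V V ℝ) (hPnn : ∀ i j, 0 ≤ P i j) (r : V) :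
    0 ≤ treeMeasure P r := by
  refine Finset.sum_nonneg fun T _ => ?_
  split
  · exact Finset.prod_nonneg fun v _ => hPnn v (T v)
  · exact le_refl 0

lemma treeMeasure_pos (P : Matrix V V ℝ) (hPnn : ∀ i j, 0 ≤ P i j)
    (hirr : ∀ i j : V, ∃ k : ℕ, 0 < (P ^ k) i j) (r : V) :
    0 < treeMeasure P r := by
  obtain ⟨T, hT⟩ := exists_tree P hPnn hirr r
  refine Finset.sum_pos' (fun T' _ => ?_) ⟨T, mem_univ T, ?_⟩
  · split
    · exact Finset.prod_nonneg fun v _ => hPnn v (T' v)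
    · exact le_refl 0
  · rw [if_pos hT]
    exact Finset.prod_pos fun v hv => (hT.2.1 v (mem_filter.mp hv).2).1

end MCTT

/-- Markov Chain Tree Theorem: for a finite-state irreducible Markov chain with
row-stochastic transition matrix `P`, the vector `Ψ` of rooted-spanning-tree
sums is a left eigenvector of `P` with eigenvalue `1`; moreover `∑_σ Ψ(σ) > 0`,
so the stationary distribution is `π(τ) = Ψ(τ)/∑_σ Ψ(σ)`. -/
theorem markov_chain_tree_theorem {V : Type*} [Fintype V] [DecidableEq V] [Nonempty V]
    (P : Matrix V V ℝ) (hPnn : ∀ i j, 0 ≤ P i j) (hProw : ∀ i, ∑ j : V, P i j = 1)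
    (hirr : ∀ i j : V, ∃ k : ℕ, 0 < (P ^ k) i j) :
    Matrix.vecMul (treeMeasure P) P = treeMeasure P ∧
      0 < ∑ σ : V, treeMeasure P σ := by
  constructor
  · funext τ
    have hvm : Matrix.vecMul (treeMeasure P) P τ = ∑ σ : V, treeMeasure P σ * P σ τ := by
      simp [Matrix.vecMul, dotProduct]
    rw [hvm]
    calc ∑ σ : V, treeMeasure P σ * P σ τ
        = ∑ σ : V, (∑ T : V → V, if MCTT.W σ T then
            ∏ v ∈ univ.filter (fun v => v ≠ σ), P v (T v) else 0) * P σ τ := by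
          refine Finset.sum_congr rfl fun σ _ => ?_
          rw [MCTT.treeMeasure_eq P hPnn σ]
      _ = ∑ f ∈ univ.filter (fun f : V → V => MCTT.Reach f τ), ∏ v, P v (f v) :=
          MCTT.step_left P τ
      _ = ∑ T : V → V, if MCTT.W τ T then
            ∏ v ∈ univ.filter (fun v => v ≠ τ), P v (T v) else 0 :=
          (MCTT.step_right P hProw τ).symm
      _ = treeMeasure P τ := (MCTT.treeMeasure_eq P hPnn τ).symm
  · have r := Classical.arbitrary V
    refine Finset.sum_pos' (fun σ _ => MCTT.treeMeasure_nonneg P hPnn σ)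
      ⟨r, mem_univ r, MCTT.treeMeasure_pos P hPnn hirr r⟩
end

section
/- Uniqueness of the stationary distribution up to scalar: if a finite-state Markov chain with row-stochastic transition matrix P is irreducible, then the space of left eigenvectors of P with eigenvalue 1 is one-dimensional; consequently any two measures satisfying the global balance equations are proportional. -/
private lemma pow_entry_nonneg {V : Type*} [Fintype V] [DecidableEq V]
    (P : Matrix V V ℝ) (hPnn : ∀ i j, 0 ≤ P i j) :
    ∀ k i j, 0 ≤ (P ^ k) i j := by
  intro k
  induction k with
  | zero => intro i j; simp [Matrix.one_apply]; positivity
  | succ k ih =>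
    intro i j
    rw [pow_succ, Matrix.mul_apply]
    exact Finset.sum_nonneg fun l _ => mul_nonneg (ih i l) (hPnn l j)

private lemma right_eig_const {V : Type*} [Fintype V] [DecidableEq V] [Nonempty V]
    (P : Matrix V V ℝ) (hPnn : ∀ i j, 0 ≤ P i j) (hProw : ∀ i, ∑ j : V, P i j = 1)
    (hirr : ∀ i j : V, ∃ k : ℕ, 0 < (P ^ k) i j)
    (x : V → ℝ) (hx : P.mulVec x = x) : ∀ i j : V, x i = x j := by
  obtain ⟨i0, hi0⟩ := Finite.exists_max x
  have step : ∀ l, x l = x i0 → ∀ j, 0 < P l j → x j = x i0 := by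
    intro l hl j hj
    have hxl : ∑ j, P l j * x j = x l := by
      have := congrFun hx l
      simpa [Matrix.mulVec, dotProduct] using this
    have hsum : ∑ j, P l j * (x i0 - x j) = 0 := by
      have : ∑ j, P l j * (x i0 - x j)
          = (∑ j, P l j) * x i0 - ∑ j, P l j * x j := by
        rw [Finset.sum_mul, ← Finset.sum_sub_distrib]
        congr 1 with j
        ring
      rw [this, hProw, hxl, hl, one_mul, sub_self]
    have hz := (Finset.sum_eq_zero_iff_of_nonneg
      (fun j _ => mul_nonneg (hPnn l j) (sub_nonneg.mpr (hi0 j)))).mp hsum j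
      (Finset.mem_univ j)
    have : x i0 - x j = 0 := by
      rcases mul_eq_zero.mp hz with h | h
      · exact absurd h (ne_of_gt hj)
      · exact h
    linarith
  have main : ∀ k j, 0 < (P ^ k) i0 j → x j = x i0 := by
    intro k
    induction k with
    | zero =>
      intro j hj
      simp only [pow_zero, Matrix.one_apply] at hj
      by_cases h : i0 = j
      · rw [h]
      · simp [h] at hj
    | succ k ih =>
      intro j hj
      rw [pow_succ, Matrix.mul_apply] at hj
      obtain ⟨l, -, hl⟩ := Finset.exists_lt_of_sum_lt
        (f := fun _ : V => (0 : ℝ)) (g := fun l => (P ^ k) i0 l * P l j)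
        (by simpa using hj)
      have hl1 : 0 < (P ^ k) i0 l * P l j := hl
      have hcases := mul_pos_iff.mp hl1
      have h1 : 0 < (P ^ k) i0 l :=
        hcases.elim (fun h => h.1)
          (fun h => absurd h.1 (not_lt.mpr (pow_entry_nonneg P hPnn k i0 l)))
      have h2 : 0 < P l j :=
        hcases.elim (fun h => h.2)
          (fun h => absurd h.1 (not_lt.mpr (pow_entry_nonneg P hPnn k i0 l)))
      exact step l (ih l h1) j h2
  intro i j
  obtain ⟨k1, hk1⟩ := hirr i0 i
  obtain ⟨k2, hk2⟩ := hirr i0 j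
  rw [main k1 i hk1, main k2 j hk2]

/-- Uniqueness of the stationary distribution up to scalar: if a finite-state
Markov chain with row-stochastic transition matrix `P` is irreducible (for all
states `i, j` there is `k ≥ 0` with `P^k i j > 0`), then the space of left
eigenvectors of `P` with eigenvalue `1` (equivalently, of measures satisfying
the global balance equations) is one-dimensional; consequently any two such
vectors are proportional. -/
theorem stationary_unique_up_to_scalar {V : Type*} [Fintype V] [DecidableEq V]
    [Nonempty V]
    (P : Matrix V V ℝ) (hPnn : ∀ i j, 0 ≤ P i j) (hProw : ∀ i, ∑ j : V, P i j = 1)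
    (hirr : ∀ i j : V, ∃ k : ℕ, 0 < (P ^ k) i j) :
    Module.finrank ℝ
      (LinearMap.ker (Matrix.vecMulLinear P - LinearMap.id (R := ℝ) (M := V → ℝ))) = 1 ∧
    ∀ u v : V → ℝ, Matrix.vecMul u P = u → Matrix.vecMul v P = v →
      ∃ a b : ℝ, ¬(a = 0 ∧ b = 0) ∧ a • u = b • v := by
  classical
  -- right kernel is spanned by the constant vector
  have hker_right : LinearMap.ker ((P - 1).mulVecLin)
      = Submodule.span ℝ {(fun _ => (1 : ℝ) : V → ℝ)} := by
    apply le_antisymm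
    · intro x hx
      have hx' : P.mulVec x = x := by
        have : (P - 1).mulVec x = 0 := hx
        rw [Matrix.sub_mulVec, Matrix.one_mulVec, sub_eq_zero] at this
        exact this
      have hc := right_eig_const P hPnn hProw hirr x hx'
      obtain ⟨j0⟩ := (inferInstance : Nonempty V)
      rw [Submodule.mem_span_singleton]
      exact ⟨x j0, by funext i; simp [hc j0 i]⟩
    · rw [Submodule.span_singleton_le_iff_mem]
      have h1 : P.mulVec (fun _ => (1 : ℝ)) = fun _ => 1 := by
        funext i
        simp [Matrix.mulVec, dotProduct, hProw i]
      have : (P - 1).mulVec (fun _ => (1 : ℝ)) = 0 := by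
        rw [Matrix.sub_mulVec, Matrix.one_mulVec, h1, sub_self]
      exact this
  have hone : (fun _ => (1 : ℝ) : V → ℝ) ≠ 0 := by
    intro h
    obtain ⟨j0⟩ := (inferInstance : Nonempty V)
    have := congrFun h j0
    norm_num at this
  have hfr_right : Module.finrank ℝ (LinearMap.ker ((P - 1).mulVecLin)) = 1 := by
    rw [hker_right]
    exact finrank_span_singleton hone
  -- transfer to left kernel via rank of transpose
  have heq_left : Matrix.vecMulLinear P - LinearMap.id (R := ℝ) (M := V → ℝ)
      = ((P - 1 : Matrix V V ℝ).transpose).mulVecLin := by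
    apply LinearMap.ext
    intro x
    simp [Matrix.mulVecLin_apply, Matrix.transpose_sub, Matrix.sub_mulVec,
      Matrix.mulVec_transpose, Matrix.one_mulVec]
  have heq_right : (P - 1 : Matrix V V ℝ).mulVecLin
      = Matrix.mulVecLin (P - 1) := rfl
  have hrank : ((P - 1 : Matrix V V ℝ).transpose).rank = (P - 1 : Matrix V V ℝ).rank :=
    Matrix.rank_transpose _
  have hnull : ∀ A : Matrix V V ℝ, Module.finrank ℝ (LinearMap.ker A.mulVecLin)
      = Fintype.card V - A.rank := by
    intro A
    have := LinearMap.finrank_range_add_finrank_ker A.mulVecLin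
    have hr : A.rank = Module.finrank ℝ (LinearMap.range A.mulVecLin) := rfl
    rw [← hr] at this
    have hdom : Module.finrank ℝ (V → ℝ) = Fintype.card V := by
      simp [Module.finrank_pi]
    omega
  have hfr_left : Module.finrank ℝ
      (LinearMap.ker (Matrix.vecMulLinear P - LinearMap.id (R := ℝ) (M := V → ℝ))) = 1 := by
    rw [heq_left, hnull, hrank, ← hnull, hfr_right]
  refine ⟨hfr_left, ?_⟩
  intro u v hu hv
  set K := LinearMap.ker (Matrix.vecMulLinear P - LinearMap.id (R := ℝ) (M := V → ℝ)) with hK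
  have hmemu : u ∈ K := by
    simp only [hK, LinearMap.mem_ker, LinearMap.sub_apply, LinearMap.id_apply,
      Matrix.vecMulLinear_apply, hu, sub_self]
  have hmemv : v ∈ K := by
    simp only [hK, LinearMap.mem_ker, LinearMap.sub_apply, LinearMap.id_apply,
      Matrix.vecMulLinear_apply, hv, sub_self]
  by_cases hv0 : v = 0
  · exact ⟨0, 1, by norm_num, by simp [hv0]⟩
  · have hv0' : (⟨v, hmemv⟩ : K) ≠ 0 := by
      intro h
      apply hv0
      exact congrArg Subtype.val h
    have := (finrank_eq_one_iff_of_nonzero' (⟨v, hmemv⟩ : K) hv0').mp hfr_left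
    obtain ⟨c, hc⟩ := this ⟨u, hmemu⟩
    refine ⟨1, c, by norm_num, ?_⟩
    have := congrArg Subtype.val hc
    simp only [SetLike.val_smul] at this
    rw [one_smul, ← this]
end
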